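/- arXiv:0912.2176 — 10 statements merged into one kernel-verified Lean document; each statement's English description precedes it below -/
import Mathlib

section
/- For every real number Q with 1 < Q ≤ 2 there exists a sequence j : ℕ → ℕ (indexed from 1) with j n ≥ 2 for all n ≥ 1 such that, with I n = ∏_{i=1}^n j i, the sequence log(2^n · I n)/log(I n) converges to Q as n → ∞. That is, every Hausdorff dimension Q ∈ (1,2] is realized by some Laakso space. -/
/-! Take `j n = 2 ^ (f n - f (n - 1))` with `f n = ⌊n / (Q - 1)⌋₊`. The product telescopes to
`I n = 2 ^ f n`, so the ratio of logarithms is `1 + n / f n`, which tends to `1 + (Q - 1) = Q`.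
The bound `Q ≤ 2` makes the slope `1 / (Q - 1)` at least `1`, so `f` is strictly increasing and
every `j n` is at least `2`. -/

open Filter Topology

theorem strictMono_floor_mul_natCast {a : ℝ} (ha : 1 ≤ a) :
    StrictMono fun n : ℕ => ⌊a * n⌋₊ := by
  refine strictMono_nat_of_lt_succ fun n => Nat.lt_of_succ_le (Nat.le_floor ?_)
  have hfloor : (⌊a * n⌋₊ : ℝ) ≤ a * n := Nat.floor_le (by positivity)
  push_cast
  linarith

theorem prod_Icc_pow_sub_pred {M : Type*} [CommMonoid M] (b : M) {f : ℕ → ℕ} (hf : Monotone f)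
    (n : ℕ) : ∏ i ∈ Finset.Icc 1 n, b ^ (f i - f (i - 1)) = b ^ (f n - f 0) := by
  induction n with
  | zero => simp
  | succ n ih =>
    rw [Finset.prod_Icc_succ_top (by omega), ih, Nat.add_sub_cancel, ← pow_add]
    have h0n : f 0 ≤ f n := hf n.zero_le
    have hn : f n ≤ f (n + 1) := hf n.le_succ
    congr 1
    omega

theorem log_pow_mul_pow_div_log_pow {b : ℝ} (hb : 1 < b) (n : ℕ) {m : ℕ} (hm : m ≠ 0) :
    Real.log (b ^ n * b ^ m) / Real.log (b ^ m) = 1 + n / m := by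
  have hlog : Real.log b ≠ 0 := (Real.log_pos hb).ne'
  rw [← pow_add, Real.log_pow, Real.log_pow]
  field_simp
  push_cast
  ring

theorem tendsto_natCast_div_floor_mul {a : ℝ} (ha : 0 < a) :
    Tendsto (fun n : ℕ => (n : ℝ) / ⌊a * n⌋₊) atTop (𝓝 a⁻¹) := by
  have hratio := ((tendsto_nat_floor_mul_div_atTop ha.le).comp
    tendsto_natCast_atTop_atTop).inv₀ ha.ne'
  simpa only [Function.comp_def, inv_div] using hratio

/-- Every `Q ∈ (1,2]` is realized as the Hausdorff dimension
`lim log(2^n I n)/log(I n)` of some Laakso space. -/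
theorem laakso_realizes_every_dimension
    (Q : ℝ) (hQ1 : 1 < Q) (hQ2 : Q ≤ 2) :
    ∃ j : ℕ → ℕ, (∀ n, 1 ≤ n → 2 ≤ j n) ∧
      Tendsto
        (fun n : ℕ =>
          Real.log ((2 : ℝ) ^ n * ((∏ i ∈ Finset.Icc 1 n, j i : ℕ) : ℝ)) /
            Real.log ((∏ i ∈ Finset.Icc 1 n, j i : ℕ) : ℝ))
        atTop (nhds Q) := by
  set a : ℝ := (Q - 1)⁻¹
  have ha : 1 ≤ a := (one_le_inv₀ (by linarith)).mpr (by linarith)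
  set f : ℕ → ℕ := fun n => ⌊a * n⌋₊
  have hf : StrictMono f := strictMono_floor_mul_natCast ha
  have hprod (n : ℕ) : ∏ i ∈ Finset.Icc 1 n, 2 ^ (f i - f (i - 1)) = 2 ^ f n := by
    simpa [f] using prod_Icc_pow_sub_pred 2 hf.monotone n
  refine ⟨fun n => 2 ^ (f n - f (n - 1)),
    fun n hn => Nat.one_lt_two_pow (Nat.sub_ne_zero_of_lt (hf (by omega))), ?_⟩
  have hratio : (fun n : ℕ => 1 + (n : ℝ) / f n) =ᶠ[atTop] fun n =>
      Real.log ((2 : ℝ) ^ n * ((∏ i ∈ Finset.Icc 1 n, 2 ^ (f i - f (i - 1)) : ℕ) : ℝ)) /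
        Real.log ((∏ i ∈ Finset.Icc 1 n, 2 ^ (f i - f (i - 1)) : ℕ) : ℝ) := by
    filter_upwards [eventually_ge_atTop 1] with n hn
    have hfn : f n ≠ 0 := (lt_of_lt_of_le hn (hf.le_apply (x := n))).ne'
    rw [hprod, Nat.cast_pow, Nat.cast_ofNat, log_pow_mul_pow_div_log_pow one_lt_two n hfn]
  have hQ : 1 + a⁻¹ = Q := by simp [a]
  rw [← hQ]
  exact ((tendsto_natCast_div_floor_mul (by linarith)).const_add 1).congr' hratio
end

section
/- For every real number r ≥ 2 there exists a sequence j : ℕ → ℕ (indexed from 1) with j n ≥ 2 for all n ≥ 1 such that, with I n = ∏_{i=1}^n j i, the sequence (I n)^{1/n} converges to r as n → ∞. -/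
/-!
Build the partial products greedily: `L 0 = 1` and `L (n+1) = L n * ⌊r ^ (n+1) / L n⌋`.
Rounding down keeps `L n ≤ r ^ n`, so each new factor is at least `r ≥ 2`, and it loses less
than one factor `L n ≤ r ^ n`, so `L (n+1) ≥ r ^ (n+1) - r ^ n ≥ r ^ (n+1) / 2`. Hence
`(r ^ n / 2) ^ (1/n) ≤ L n ^ (1/n) ≤ r`, and both bounds tend to `r`.
-/

open Filter Topology

lemma tendsto_rpow_one_div_natCast_nhds_one {c : ℝ} (hc : 0 < c) :
    Tendsto (fun n : ℕ => c ^ (1 / (n : ℝ))) atTop (𝓝 1) := by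
  have hcont : ContinuousAt (fun x : ℝ => c ^ x) 0 := Real.continuousAt_const_rpow hc.ne'
  simpa [Function.comp_def] using hcont.tendsto.comp tendsto_one_div_atTop_nhds_zero_nat

lemma mul_pow_rpow_one_div_natCast {c r : ℝ} (hc : 0 ≤ c) (hr : 0 ≤ r) {n : ℕ} (hn : n ≠ 0) :
    (c * r ^ n) ^ (1 / (n : ℝ)) = c ^ (1 / (n : ℝ)) * r := by
  rw [Real.mul_rpow hc (by positivity), one_div, Real.pow_rpow_inv_natCast hr hn]

lemma tendsto_rpow_one_div_of_geometric_bounds {a : ℕ → ℝ} {r c C : ℝ} (hr : 0 ≤ r)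
    (hc : 0 < c) (hC : 0 < C) (hlow : ∀ n, c * r ^ n ≤ a n) (hup : ∀ n, a n ≤ C * r ^ n) :
    Tendsto (fun n : ℕ => a n ^ (1 / (n : ℝ))) atTop (𝓝 r) := by
  have hlim : ∀ {d : ℝ}, 0 < d →
      Tendsto (fun n : ℕ => (d * r ^ n) ^ (1 / (n : ℝ))) atTop (𝓝 r) := fun {d} hd => by
    have := (tendsto_rpow_one_div_natCast_nhds_one hd).mul_const r
    rw [one_mul] at this
    refine this.congr' ?_
    filter_upwards [eventually_ne_atTop 0] with n hn
    exact (mul_pow_rpow_one_div_natCast hd.le hr hn).symm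
  refine tendsto_of_tendsto_of_tendsto_of_le_of_le (hlim hc) (hlim hC) (fun n => ?_) (fun n => ?_)
  · exact Real.rpow_le_rpow (by positivity) (hlow n) (by positivity)
  · exact Real.rpow_le_rpow ((by positivity : 0 ≤ c * r ^ n).trans (hlow n)) (hup n)
      (by positivity)

noncomputable def greedyProd (r : ℝ) : ℕ → ℕ
  | 0 => 1
  | n + 1 => greedyProd r n * ⌊r ^ (n + 1) / greedyProd r n⌋₊

noncomputable def greedyFactor (r : ℝ) (n : ℕ) : ℕ :=
  ⌊r ^ n / greedyProd r (n - 1)⌋₊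

lemma prod_Icc_greedyFactor (r : ℝ) (n : ℕ) :
    ∏ i ∈ Finset.Icc 1 n, greedyFactor r i = greedyProd r n := by
  induction n with
  | zero => rfl
  | succ n ih =>
    rw [Finset.prod_Icc_succ_top (Nat.le_add_left 1 n), ih]
    rfl

lemma greedyProd_le {r : ℝ} (hr : 0 ≤ r) (n : ℕ) : (greedyProd r n : ℝ) ≤ r ^ n := by
  cases n with
  | zero => simp [greedyProd]
  | succ n =>
    set L : ℝ := (greedyProd r n : ℝ)
    have hL : 0 ≤ L := Nat.cast_nonneg _
    calc (greedyProd r (n + 1) : ℝ) = L * ⌊r ^ (n + 1) / L⌋₊ := by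
          simp only [greedyProd, Nat.cast_mul, L]
      _ ≤ L * (r ^ (n + 1) / L) := by gcongr; exact Nat.floor_le (by positivity)
      _ ≤ r ^ (n + 1) := by
          rcases hL.eq_or_lt with h | h
          · rw [← h, zero_mul]; positivity
          · rw [mul_div_cancel₀ _ h.ne']

lemma le_div_greedyProd {r : ℝ} (hr : 0 ≤ r) (n : ℕ) (hL : 0 < greedyProd r n) :
    r ≤ r ^ (n + 1) / greedyProd r n := by
  rw [le_div_iff₀ (by exact_mod_cast hL), pow_succ, mul_comm]
  exact mul_le_mul_of_nonneg_right (greedyProd_le hr n) hr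

lemma greedyProd_pos {r : ℝ} (hr : 1 ≤ r) (n : ℕ) : 0 < greedyProd r n := by
  induction n with
  | zero => exact Nat.one_pos
  | succ n ih =>
    refine Nat.mul_pos ih (Nat.floor_pos.mpr ?_)
    exact hr.trans (le_div_greedyProd (by linarith) n ih)

lemma le_greedyFactor {r : ℝ} (hr : 1 ≤ r) {n : ℕ} (hn : 1 ≤ n) : ⌊r⌋₊ ≤ greedyFactor r n := by
  obtain ⟨m, rfl⟩ := Nat.exists_eq_add_of_le' hn
  exact Nat.floor_le_floor (le_div_greedyProd (by linarith) m (greedyProd_pos hr m))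

lemma div_two_le_greedyProd {r : ℝ} (hr : 2 ≤ r) (n : ℕ) : r ^ n / 2 ≤ greedyProd r n := by
  cases n with
  | zero => norm_num [greedyProd]
  | succ n =>
    set L : ℝ := (greedyProd r n : ℝ)
    have hL : 0 < L := Nat.cast_pos.mpr (greedyProd_pos (by linarith) n)
    have hLr : L ≤ r ^ n := greedyProd_le (by linarith) n
    calc r ^ (n + 1) / 2 ≤ r ^ (n + 1) - r ^ n := by
          rw [pow_succ]; nlinarith [pow_nonneg (by linarith : (0 : ℝ) ≤ r) n]
      _ ≤ L * (r ^ (n + 1) / L - 1) := by rw [mul_sub, mul_div_cancel₀ _ hL.ne']; linarith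
      _ ≤ L * ⌊r ^ (n + 1) / L⌋₊ := by gcongr; exact (Nat.sub_one_lt_floor _).le
      _ = greedyProd r (n + 1) := by simp only [greedyProd, Nat.cast_mul, L]

/-- Every real `r ≥ 2` is realized as the contraction ratio
`r = lim (I n)^(1/n)` of some Laakso space. -/
theorem laakso_realizes_every_contraction_ratio
    (r : ℝ) (hr : 2 ≤ r) :
    ∃ j : ℕ → ℕ, (∀ n, 1 ≤ n → 2 ≤ j n) ∧
      Tendsto
        (fun n : ℕ => ((∏ i ∈ Finset.Icc 1 n, j i : ℕ) : ℝ) ^ (1 / (n : ℝ)))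
        atTop (nhds r) := by
  refine ⟨greedyFactor r, fun n hn => ?_, ?_⟩
  · exact (Nat.le_floor (by exact_mod_cast hr)).trans (le_greedyFactor (by linarith) hn)
  · simp only [prod_Icc_greedyFactor]
    refine tendsto_rpow_one_div_of_geometric_bounds (c := 1 / 2) (C := 1) (by linarith)
      (by norm_num) one_pos (fun n => ?_) (fun n => ?_)
    · rw [one_div_mul_eq_div]; exact div_two_le_greedyProd hr n
    · rw [one_mul]; exact greedyProd_le (by linarith) n
end

section
/- Let L > 0 and λ ∈ ℝ. There exist functions f₁, f₂, f₃, f₄ : ℝ → ℝ, each twice continuously differentiable on [0, L], not all identically zero on [0, L], satisfying fᵢ''(x) = −λ·fᵢ(x) for all x ∈ [0, L] and i = 1,...,4, together with the Dirichlet conditions fᵢ(0) = 0 at the four outer nodes, the continuity conditions f₁(L) = f₂(L) = f₃(L) = f₄(L), and the Kirchhoff condition f₁'(L) + f₂'(L) + f₃'(L) + f₄'(L) = 0 at the central node, if and only if λ = (k·π/(2L))² for some integer k ≥ 1. -/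
/-!
Every Dirichlet solution of `f'' = -λ f` on an edge is a multiple `c • S` of the sine-like
fundamental solution `S` (with `S' = C`, `C' = -λ S`, `S 0 = 0`, `C 0 = 1`). On a star graph,
continuity at the center forces all the multiples `cᵢ` to agree unless `S L = 0`, and Kirchhoff
then forces `(∑ cᵢ) C L = 0`; so an eigenfunction exists iff `S L = 0 ∨ C L = 0`. For `λ ≤ 0`
both `S L` and `C L` are positive, and for `λ = w² > 0` the condition reads
`sin (w L) cos (w L) = 0`, i.e. `2 w L ∈ π ℤ`.
-/

open Real Set Topology

structure IsSineCosinePair (lam : ℝ) (S C : ℝ → ℝ) : Prop where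
  hasDerivAt_fst : ∀ x, HasDerivAt S (C x) x
  hasDerivAt_snd : ∀ x, HasDerivAt C (-lam * S x) x
  fst_zero : S 0 = 0
  snd_zero : C 0 = 1

structure IsEdgeSolution (L lam : ℝ) (f : ℝ → ℝ) : Prop where
  contDiffOn : ContDiffOn ℝ 2 f (Icc 0 L)
  derivWithin_derivWithin :
    ∀ x ∈ Icc 0 L, derivWithin (derivWithin f (Icc 0 L)) (Icc 0 L) x = -lam * f x
  map_zero : f 0 = 0

structure IsStarEigenfunction {ι : Type*} [Fintype ι] (L lam : ℝ) (f : ι → ℝ → ℝ) : Prop where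
  edge : ∀ i, IsEdgeSolution L lam (f i)
  continuity : ∀ i j, f i L = f j L
  kirchhoff : ∑ i, derivWithin (f i) (Icc 0 L) L = 0
  ne_zero : ∃ i, ∃ x ∈ Icc 0 L, f i x ≠ 0

lemma isSineCosinePair_sin {w : ℝ} (hw : w ≠ 0) :
    IsSineCosinePair (w ^ 2) (fun x => sin (w * x) / w) (fun x => cos (w * x)) where
  hasDerivAt_fst x :=
    (((hasDerivAt_id' x).const_mul w).sin.div_const w).congr_deriv (by field_simp)
  hasDerivAt_snd x := ((hasDerivAt_id' x).const_mul w).cos.congr_deriv (by field_simp)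
  fst_zero := by simp
  snd_zero := by simp

lemma isSineCosinePair_sinh {w : ℝ} (hw : w ≠ 0) :
    IsSineCosinePair (-w ^ 2) (fun x => sinh (w * x) / w) (fun x => cosh (w * x)) where
  hasDerivAt_fst x :=
    (((hasDerivAt_id' x).const_mul w).sinh.div_const w).congr_deriv (by field_simp)
  hasDerivAt_snd x := ((hasDerivAt_id' x).const_mul w).cosh.congr_deriv (by field_simp)
  fst_zero := by simp
  snd_zero := by simp

lemma isSineCosinePair_zero : IsSineCosinePair 0 id 1 where
  hasDerivAt_fst := hasDerivAt_id
  hasDerivAt_snd x := by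
    rw [neg_zero, zero_mul]
    exact hasDerivAt_const x 1
  fst_zero := rfl
  snd_zero := rfl

section

variable {L lam : ℝ} {S C f : ℝ → ℝ}

namespace IsSineCosinePair

lemma contDiff (hSC : IsSineCosinePair lam S C) : ContDiff ℝ 2 S := by
  have hS : deriv S = C := funext fun x => (hSC.hasDerivAt_fst x).deriv
  have hC : deriv C = fun x => -lam * S x := funext fun x => (hSC.hasDerivAt_snd x).deriv
  have hS_diff : Differentiable ℝ S := fun x => (hSC.hasDerivAt_fst x).differentiableAt
  have hC_diff : Differentiable ℝ C := fun x => (hSC.hasDerivAt_snd x).differentiableAt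
  rw [show (2 : WithTop ℕ∞) = 1 + 1 from rfl, contDiff_succ_iff_deriv, hS, contDiff_one_iff_deriv,
    hC]
  exact ⟨hS_diff, by simp, hC_diff, continuous_const.mul hS_diff.continuous⟩

lemma derivWithin_const_mul (hSC : IsSineCosinePair lam S C) (hL : 0 < L) (c : ℝ) {x : ℝ}
    (hx : x ∈ Icc 0 L) : derivWithin (fun y => c * S y) (Icc 0 L) x = c * C x :=
  ((hSC.hasDerivAt_fst x).const_mul c).hasDerivWithinAt.derivWithin (uniqueDiffOn_Icc hL x hx)

lemma isEdgeSolution_const_mul (hSC : IsSineCosinePair lam S C) (hL : 0 < L) (c : ℝ) :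
    IsEdgeSolution L lam (fun x => c * S x) where
  contDiffOn := (contDiff_const.mul hSC.contDiff).contDiffOn
  derivWithin_derivWithin x hx := by
    rw [derivWithin_congr (fun y hy => hSC.derivWithin_const_mul hL c hy)
      (hSC.derivWithin_const_mul hL c hx),
      ((hSC.hasDerivAt_snd x).const_mul c).hasDerivWithinAt.derivWithin
        (uniqueDiffOn_Icc hL x hx)]
    ring
  map_zero := by simp [hSC.fst_zero]

end IsSineCosinePair

namespace IsEdgeSolution

lemma hasDerivWithinAt (hf : IsEdgeSolution L lam f) {x : ℝ} (hx : x ∈ Icc 0 L) :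
    HasDerivWithinAt f (derivWithin f (Icc 0 L) x) (Icc 0 L) x :=
  (hf.contDiffOn.differentiableOn (by norm_num) x hx).hasDerivWithinAt

lemma hasDerivWithinAt_derivWithin (hf : IsEdgeSolution L lam f) (hL : 0 < L) {x : ℝ}
    (hx : x ∈ Icc 0 L) :
    HasDerivWithinAt (derivWithin f (Icc 0 L)) (-lam * f x) (Icc 0 L) x := by
  rw [← hf.derivWithin_derivWithin x hx]
  exact ((hf.contDiffOn.derivWithin (m := 1) (uniqueDiffOn_Icc hL) (by norm_num)).differentiableOn
    (by norm_num) x hx).hasDerivWithinAt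

/-- Both sides solve the linear system `(u, v)' = (v, -λ u)` with the same value at `0`. -/
lemma eqOn_const_mul (hf : IsEdgeSolution L lam f) (hSC : IsSineCosinePair lam S C)
    (hL : 0 < L) :
    EqOn (fun x => (f x, derivWithin f (Icc 0 L) x))
      (fun x => (derivWithin f (Icc 0 L) 0 * S x, derivWithin f (Icc 0 L) 0 * C x)) (Icc 0 L) := by
  set c := derivWithin f (Icc 0 L) 0
  let V : ℝ × ℝ →L[ℝ] ℝ × ℝ :=
    (ContinuousLinearMap.snd ℝ ℝ ℝ).prod ((-lam) • ContinuousLinearMap.fst ℝ ℝ ℝ)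
  have hS_diff : Differentiable ℝ S := fun x => (hSC.hasDerivAt_fst x).differentiableAt
  have hC_diff : Differentiable ℝ C := fun x => (hSC.hasDerivAt_snd x).differentiableAt
  refine ODE_solution_unique_of_mem_Icc_right (v := fun _ => V) (s := fun _ => univ) (K := ‖V‖₊)
    (fun _ _ => V.lipschitz.lipschitzOnWith)
    (hf.contDiffOn.continuousOn.prodMk
      (hf.contDiffOn.continuousOn_derivWithin (uniqueDiffOn_Icc hL) (by norm_num)))
    (fun t ht => ((hf.hasDerivWithinAt (Ico_subset_Icc_self ht)).prodMk
      (hf.hasDerivWithinAt_derivWithin hL (Ico_subset_Icc_self ht))).mono_of_mem_nhdsWithin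
        (Icc_mem_nhdsGE_of_mem ht))
    (fun _ _ => mem_univ _)
    ((continuous_const.mul hS_diff.continuous).prodMk
      (continuous_const.mul hC_diff.continuous)).continuousOn
    (fun t _ => ?_) (fun _ _ => mem_univ _)
    (by simp [hf.map_zero, hSC.fst_zero, hSC.snd_zero, c])
  convert (((hSC.hasDerivAt_fst t).const_mul c).prodMk
    ((hSC.hasDerivAt_snd t).const_mul c)).hasDerivWithinAt using 1
  simp only [V, ContinuousLinearMap.prod_apply, ContinuousLinearMap.coe_snd',
    smul_apply, ContinuousLinearMap.coe_fst', smul_eq_mul]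
  congr 1
  ring

end IsEdgeSolution

end

section

variable {ι : Type*} [Fintype ι] {L lam : ℝ} {S C : ℝ → ℝ}

namespace IsSineCosinePair

lemma exists_ne_zero (hSC : IsSineCosinePair lam S C) (hL : 0 < L) :
    ∃ x ∈ Icc 0 L, S x ≠ 0 := by
  have hS_ne : ∀ᶠ x in 𝓝[>] 0, S x ≠ 0 :=
    ((hSC.hasDerivAt_fst 0).eventually_ne (by simp [hSC.snd_zero])).filter_mono
      (nhdsGT_le_nhdsNE 0)
  obtain ⟨x, hx, hSx⟩ := (hS_ne.and (Ioo_mem_nhdsGT hL)).exists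
  exact ⟨x, Ioo_subset_Icc_self hSx, hx⟩

lemma isStarEigenfunction_const_mul (hSC : IsSineCosinePair lam S C) (hL : 0 < L) (c : ι → ℝ)
    (hS : ∀ i j, c i * S L = c j * S L) (hC : (∑ i, c i) * C L = 0) (hc : ∃ i, c i ≠ 0) :
    IsStarEigenfunction L lam (fun i x => c i * S x) where
  edge i := hSC.isEdgeSolution_const_mul hL (c i)
  continuity := hS
  kirchhoff := by
    rw [Finset.sum_congr rfl fun i _ =>
      hSC.derivWithin_const_mul hL (c i) (right_mem_Icc.2 hL.le), ← Finset.sum_mul]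
    exact hC
  ne_zero := by
    obtain ⟨i, hi⟩ := hc
    obtain ⟨x, hx, hSx⟩ := hSC.exists_ne_zero hL
    exact ⟨i, x, hx, mul_ne_zero hi hSx⟩

/-- An antisymmetric pair of edges handles `S L = 0`, all edges equal handle `C L = 0`. -/
lemma exists_isStarEigenfunction [Nontrivial ι] (hSC : IsSineCosinePair lam S C) (hL : 0 < L)
    (h : S L = 0 ∨ C L = 0) : ∃ f : ι → ℝ → ℝ, IsStarEigenfunction L lam f := by
  classical
  obtain ⟨a, b, hab⟩ := exists_pair_ne ι
  rcases h with hS | hC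
  · refine ⟨_, hSC.isStarEigenfunction_const_mul hL (Pi.single a 1 - Pi.single b 1)
      (by simp [hS]) (by simp [Finset.sum_sub_distrib]) ⟨a, by simp [hab]⟩⟩
  · exact ⟨_, hSC.isStarEigenfunction_const_mul hL (fun _ => 1) (fun _ _ => rfl)
      (by simp [hC]) ⟨a, one_ne_zero⟩⟩

end IsSineCosinePair

lemma IsStarEigenfunction.eq_zero_or_eq_zero {f : ι → ℝ → ℝ}
    (hf : IsStarEigenfunction L lam f) (hSC : IsSineCosinePair lam S C) (hL : 0 < L) :
    S L = 0 ∨ C L = 0 := by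
  set c : ι → ℝ := fun i => derivWithin (f i) (Icc 0 L) 0
  have hL_mem : L ∈ Icc 0 L := right_mem_Icc.2 hL.le
  have hf_eq (i : ι) {x : ℝ} (hx : x ∈ Icc 0 L) : f i x = c i * S x :=
    congrArg Prod.fst ((hf.edge i).eqOn_const_mul hSC hL hx)
  have hf'_eq (i : ι) : derivWithin (f i) (Icc 0 L) L = c i * C L :=
    congrArg Prod.snd ((hf.edge i).eqOn_const_mul hSC hL hL_mem)
  by_contra! h
  obtain ⟨i₀, x₀, hx₀, hne⟩ := hf.ne_zero
  have hc_eq (i : ι) : c i = c i₀ := by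
    have := hf.continuity i i₀
    rw [hf_eq i hL_mem, hf_eq i₀ hL_mem] at this
    exact mul_right_cancel₀ h.1 this
  have hsum : (Fintype.card ι : ℝ) * c i₀ * C L = 0 := by
    have := hf.kirchhoff
    rwa [Finset.sum_congr rfl fun i _ => hf'_eq i, ← Finset.sum_mul,
      Finset.sum_congr rfl fun i _ => hc_eq i, Finset.sum_const, nsmul_eq_mul,
      Finset.card_univ] at this
  have hc₀ : c i₀ = 0 := by simpa [h.2, (Fintype.card_pos_iff.2 ⟨i₀⟩).ne'] using hsum
  exact hne (by rw [hf_eq i₀ hx₀, hc₀, zero_mul])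

end

lemma sin_eq_zero_or_cos_eq_zero_iff_of_pos {x : ℝ} (hx : 0 < x) :
    sin x = 0 ∨ cos x = 0 ↔ ∃ k : ℕ, 1 ≤ k ∧ x = k * (π / 2) := by
  have h_two_mul : sin x = 0 ∨ cos x = 0 ↔ sin (2 * x) = 0 := by
    rw [sin_two_mul, mul_assoc, mul_eq_zero, mul_eq_zero]
    simp
  rw [h_two_mul, sin_eq_zero_iff]
  constructor
  · rintro ⟨n, hn⟩
    have hn_pos : 0 < n := by
      have : (0 : ℝ) < n * π := by rw [hn]; positivity
      exact_mod_cast pos_of_mul_pos_left this pi_pos.le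
    refine ⟨n.toNat, by omega, ?_⟩
    rw [show ((n.toNat : ℕ) : ℝ) = n by exact_mod_cast Int.toNat_of_nonneg hn_pos.le]
    linarith
  · rintro ⟨k, -, rfl⟩
    exact ⟨k, by push_cast; ring⟩

lemma exists_nat_of_forall_isSineCosinePair {L lam : ℝ} (hL : 0 < L)
    (h : ∀ S C, IsSineCosinePair lam S C → S L = 0 ∨ C L = 0) :
    ∃ k : ℕ, 1 ≤ k ∧ lam = (k * π / (2 * L)) ^ 2 := by
  rcases lt_trichotomy lam 0 with hneg | rfl | hpos
  · obtain ⟨w, hw, rfl⟩ : ∃ w, 0 < w ∧ lam = -w ^ 2 :=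
      ⟨√(-lam), sqrt_pos.2 (neg_pos.2 hneg), by rw [sq_sqrt (neg_pos.2 hneg).le, neg_neg]⟩
    rcases h _ _ (isSineCosinePair_sinh hw.ne') with h | h
    · exact absurd h (div_pos (sinh_pos_iff.2 (mul_pos hw hL)) hw).ne'
    · exact absurd h (cosh_pos _).ne'
  · rcases h _ _ isSineCosinePair_zero with h | h
    · exact absurd h hL.ne'
    · exact absurd h one_ne_zero
  · obtain ⟨w, hw, rfl⟩ : ∃ w, 0 < w ∧ lam = w ^ 2 :=
      ⟨√lam, sqrt_pos.2 hpos, (sq_sqrt hpos.le).symm⟩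
    have hwL : sin (w * L) = 0 ∨ cos (w * L) = 0 := by
      simpa [hw.ne'] using h _ _ (isSineCosinePair_sin hw.ne')
    obtain ⟨k, hk, hk_eq⟩ := (sin_eq_zero_or_cos_eq_zero_iff_of_pos (mul_pos hw hL)).1 hwL
    refine ⟨k, hk, ?_⟩
    rw [show w = k * π / (2 * L) by field_simp; linarith]

theorem star_dirichlet_eigenvalues {ι : Type*} [Fintype ι] [Nontrivial ι] {L : ℝ} (hL : 0 < L)
    (lam : ℝ) :
    (∃ f : ι → ℝ → ℝ, IsStarEigenfunction L lam f) ↔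
      ∃ k : ℕ, 1 ≤ k ∧ lam = (k * π / (2 * L)) ^ 2 := by
  constructor
  · rintro ⟨f, hf⟩
    exact exists_nat_of_forall_isSineCosinePair hL fun S C hSC => hf.eq_zero_or_eq_zero hSC hL
  · rintro ⟨k, hk, rfl⟩
    set w := k * π / (2 * L)
    have hw : 0 < w := by positivity
    have hwL : sin (w * L) = 0 ∨ cos (w * L) = 0 :=
      (sin_eq_zero_or_cos_eq_zero_iff_of_pos (mul_pos hw hL)).2
        ⟨k, hk, by simp only [w]; field_simp⟩
    refine (isSineCosinePair_sin hw.ne').exists_isStarEigenfunction hL ?_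
    simpa [hw.ne'] using hwL

/-- Eigenvalues of the Laplacian on the 'X' quantum graph (four edges of length `L` meeting
at a central node, Dirichlet conditions at the four outer nodes, continuity and Kirchhoff
matching at the center) are exactly `(kπ/(2L))²`, `k ≥ 1`. -/
theorem X_shape_dirichlet_eigenvalues (L : ℝ) (hL : 0 < L) (lam : ℝ) :
    (∃ f₁ f₂ f₃ f₄ : ℝ → ℝ,
        ContDiffOn ℝ 2 f₁ (Icc 0 L) ∧ ContDiffOn ℝ 2 f₂ (Icc 0 L) ∧
        ContDiffOn ℝ 2 f₃ (Icc 0 L) ∧ ContDiffOn ℝ 2 f₄ (Icc 0 L) ∧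
        ((∃ x ∈ Icc (0 : ℝ) L, f₁ x ≠ 0) ∨ (∃ x ∈ Icc (0 : ℝ) L, f₂ x ≠ 0) ∨
          (∃ x ∈ Icc (0 : ℝ) L, f₃ x ≠ 0) ∨ (∃ x ∈ Icc (0 : ℝ) L, f₄ x ≠ 0)) ∧
        (∀ x ∈ Icc (0 : ℝ) L,
          derivWithin (derivWithin f₁ (Icc 0 L)) (Icc 0 L) x = -lam * f₁ x) ∧
        (∀ x ∈ Icc (0 : ℝ) L,
          derivWithin (derivWithin f₂ (Icc 0 L)) (Icc 0 L) x = -lam * f₂ x) ∧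
        (∀ x ∈ Icc (0 : ℝ) L,
          derivWithin (derivWithin f₃ (Icc 0 L)) (Icc 0 L) x = -lam * f₃ x) ∧
        (∀ x ∈ Icc (0 : ℝ) L,
          derivWithin (derivWithin f₄ (Icc 0 L)) (Icc 0 L) x = -lam * f₄ x) ∧
        f₁ 0 = 0 ∧ f₂ 0 = 0 ∧ f₃ 0 = 0 ∧ f₄ 0 = 0 ∧
        f₁ L = f₂ L ∧ f₂ L = f₃ L ∧ f₃ L = f₄ L ∧
        derivWithin f₁ (Icc 0 L) L + derivWithin f₂ (Icc 0 L) L +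
          derivWithin f₃ (Icc 0 L) L + derivWithin f₄ (Icc 0 L) L = 0) ↔
      ∃ k : ℕ, 1 ≤ k ∧ lam = ((k : ℝ) * π / (2 * L)) ^ 2 := by
  rw [← star_dirichlet_eigenvalues (ι := Fin 4) hL]
  constructor
  · rintro ⟨f₁, f₂, f₃, f₄, h₁, h₂, h₃, h₄, hne, e₁, e₂, e₃, e₄, z₁, z₂, z₃, z₄,
      c₁₂, c₂₃, c₃₄, hK⟩
    refine ⟨![f₁, f₂, f₃, f₄], ⟨?_, ?_, by simpa [Fin.sum_univ_four] using hK, ?_⟩⟩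
    · intro i
      fin_cases i
      exacts [⟨h₁, e₁, z₁⟩, ⟨h₂, e₂, z₂⟩, ⟨h₃, e₃, z₃⟩, ⟨h₄, e₄, z₄⟩]
    · have hcenter (i : Fin 4) : ![f₁, f₂, f₃, f₄] i L = f₁ L := by
        fin_cases i
        exacts [rfl, c₁₂.symm, (c₁₂.trans c₂₃).symm, (c₁₂.trans (c₂₃.trans c₃₄)).symm]
      exact fun i j => (hcenter i).trans (hcenter j).symm
    · rcases hne with ⟨x, hx, h⟩ | ⟨x, hx, h⟩ | ⟨x, hx, h⟩ | ⟨x, hx, h⟩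
      exacts [⟨0, x, hx, h⟩, ⟨1, x, hx, h⟩, ⟨2, x, hx, h⟩, ⟨3, x, hx, h⟩]
  · rintro ⟨f, ⟨hedge, hcont, hK, i, x, hx, hne⟩⟩
    refine ⟨f 0, f 1, f 2, f 3, (hedge 0).contDiffOn, (hedge 1).contDiffOn, (hedge 2).contDiffOn,
      (hedge 3).contDiffOn, ?_, (hedge 0).derivWithin_derivWithin,
      (hedge 1).derivWithin_derivWithin, (hedge 2).derivWithin_derivWithin,
      (hedge 3).derivWithin_derivWithin, (hedge 0).map_zero, (hedge 1).map_zero,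
      (hedge 2).map_zero, (hedge 3).map_zero, hcont 0 1, hcont 1 2, hcont 2 3,
      by simpa [Fin.sum_univ_four] using hK⟩
    fin_cases i
    exacts [Or.inl ⟨x, hx, hne⟩, Or.inr (Or.inl ⟨x, hx, hne⟩),
      Or.inr (Or.inr (Or.inl ⟨x, hx, hne⟩)), Or.inr (Or.inr (Or.inr ⟨x, hx, hne⟩))]
end

section
/- Let j : ℕ → ℕ (indexed from 1) satisfy j n ≥ 2 for all n ≥ 1, set I n = ∏_{i=1}^n j i, and let s ∈ ℂ with Re(s) > 1. Then the family of terms (multiplicity)·λ^{−s}, where λ ranges over the nonzero eigenvalues k²π² (k ≥ 1, multiplicity 1), (k+1/2)²π²(I n)² (k ≥ 0, n ≥ 1, multiplicity 2^n), k²π²(I n)² (k ≥ 1, n ≥ 1, multiplicity 2^{n−1}(j n − 2)·I(n−1)), k²π²(I n)² (k ≥ 1, n ≥ 2, multiplicity 2^{n−1}(I(n−1) − 1)), and k²π²(I n)²/4 (k ≥ 1, n ≥ 2, multiplicity 2^{n−2}(I(n−1) − 1)), is absolutely summable. -/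
/-!
For `σ = Re s > 1` we have `‖λ ^ (-s)‖ = λ ^ (-σ)`, and every eigenvalue has the shape
`(k + c)² C · I_b²`, so each term factors as `(multiplicity · I_b^(-2σ)) · ((k + c)² C)^(-σ)`.
The factor in `k` is a shifted `p`-series with exponent `2σ > 1`. At level `n` the multiplicity
is at most `2^b I_b` with `b = n + 1` or `n + 2`, and `I_b ≥ 2^b`, so the level factor is at most
`2^b I_b^(1 - 2σ) ≤ (2^(2 - 2σ))^b`, a geometric sequence.
-/

open Real

theorem summable_nat_add_sq_mul_rpow_neg {c C σ : ℝ} (hc : 0 < c) (hC : 0 < C)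
    (hσ : 1 < 2 * σ) : Summable fun k : ℕ => (((k : ℝ) + c) ^ 2 * C) ^ (-σ) := by
  refine (((Real.summable_one_div_nat_add_rpow c _).2 hσ).mul_left (C ^ (-σ))).congr fun k => ?_
  have hk : 0 < (k : ℝ) + c := by positivity
  rw [abs_of_pos hk, Real.mul_rpow (by positivity) hC.le, ← Real.rpow_natCast_mul hk.le,
    one_div, ← Real.rpow_neg hk.le]
  push_cast
  ring_nf

theorem summable_pow_mul_mul_sq_rpow_neg {b σ : ℝ} {x : ℕ → ℝ} (hb : 1 < b) (hσ : 1 < σ)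
    (hx : ∀ n, b ^ n ≤ x n) : Summable fun n => b ^ n * x n * (x n ^ 2) ^ (-σ) := by
  have hb0 : 0 < b := one_pos.trans hb
  have hr : b * b ^ (1 - 2 * σ) < 1 := by
    rw [← Real.rpow_one_add' hb0.le (by linarith)]
    exact Real.rpow_lt_one_of_one_lt_of_neg hb (by linarith)
  have hx0 (n : ℕ) : 0 < x n := (pow_pos hb0 n).trans_le (hx n)
  refine (summable_geometric_of_lt_one (by positivity) hr).of_nonneg_of_le
    (fun n => by have := hx0 n; positivity) fun n => ?_
  have hxn := hx0 n
  calc b ^ n * x n * (x n ^ 2) ^ (-σ) = b ^ n * x n ^ (1 - 2 * σ) := by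
        rw [mul_assoc, ← Real.rpow_natCast_mul hxn.le, sub_eq_add_neg, Real.rpow_add hxn,
          Real.rpow_one]
        push_cast
        ring_nf
    _ ≤ b ^ n * (b ^ n) ^ (1 - 2 * σ) := by
        refine mul_le_mul_of_nonneg_left ?_ (by positivity)
        exact Real.rpow_le_rpow_of_nonpos (pow_pos hb0 n) (hx n) (by linarith)
    _ = (b * b ^ (1 - 2 * σ)) ^ n := by
        rw [mul_pow, Real.rpow_pow_comm hb0.le]

theorem summable_norm_mul_cpow_neg_of_norm_le {b c C : ℝ} {s : ℂ} {x : ℕ → ℝ} {m : ℕ → ℂ}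
    (hb : 1 < b) (hx : ∀ n, b ^ n ≤ x n) (d : ℕ) (hm : ∀ n, ‖m n‖ ≤ b ^ (n + d) * x (n + d))
    (hc : 0 < c) (hC : 0 < C) (hs : 1 < s.re) :
    Summable fun p : ℕ × ℕ =>
      ‖m p.1 * (((((p.2 : ℝ) + c) ^ 2 * C * x (p.1 + d) ^ 2 : ℝ) : ℂ) ^ (-s))‖ := by
  have hx0 : ∀ n, 0 < x n := fun n => (pow_pos (one_pos.trans hb) n).trans_le (hx n)
  have hmult : Summable fun n => ‖m n‖ * (x (n + d) ^ 2) ^ (-s.re) :=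
    ((summable_nat_add_iff d).2 (summable_pow_mul_mul_sq_rpow_neg hb hs hx)).of_nonneg_of_le
      (fun n => by positivity) fun n => by gcongr; exact hm n
  have heigen := summable_nat_add_sq_mul_rpow_neg hc hC (by linarith : 1 < 2 * s.re)
  refine (hmult.mul_of_nonneg heigen (fun n => by positivity) fun k => by positivity).congr
    fun ⟨n, k⟩ => ?_
  have := hx0 (n + d)
  rw [norm_mul, Complex.norm_cpow_eq_rpow_re_of_pos (by positivity), Complex.neg_re,
    Real.mul_rpow (x := ((k : ℝ) + c) ^ 2 * C) (by positivity) (by positivity)]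
  ring

theorem pow_le_prod_Icc_one {j : ℕ → ℕ} {b : ℕ} (hj : ∀ n, 1 ≤ n → b ≤ j n) (n : ℕ) :
    b ^ n ≤ ∏ i ∈ Finset.Icc 1 n, j i := by
  simpa using Finset.pow_card_le_prod _ _ _ fun i hi => hj i (Finset.mem_Icc.1 hi).1

/-- For `Re s > 1`, the family `(multiplicity)·λ^(−s)` over the nonzero eigenvalues of the
Laplacian on a Laakso space is absolutely summable. -/
theorem laakso_zeta_absolutely_summable
    (j : ℕ → ℕ) (hj : ∀ n, 1 ≤ n → 2 ≤ j n)
    (I : ℕ → ℕ) (hI : ∀ n, I n = ∏ i ∈ Finset.Icc 1 n, j i)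
    (s : ℂ) (hs : 1 < s.re) :
    Summable (fun k : ℕ =>
      ‖((((k : ℝ) + 1) ^ 2 * π ^ 2 : ℝ) : ℂ) ^ (-s)‖) ∧
    Summable (fun p : ℕ × ℕ =>
      ‖(2 : ℂ) ^ (p.1 + 1) *
        (((((p.2 : ℝ) + 1 / 2) ^ 2 * π ^ 2 * (I (p.1 + 1) : ℝ) ^ 2 : ℝ) : ℂ) ^ (-s))‖) ∧
    Summable (fun p : ℕ × ℕ =>
      ‖((2 ^ p.1 * (j (p.1 + 1) - 2) * I p.1 : ℕ) : ℂ) *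
        (((((p.2 : ℝ) + 1) ^ 2 * π ^ 2 * (I (p.1 + 1) : ℝ) ^ 2 : ℝ) : ℂ) ^ (-s))‖) ∧
    Summable (fun p : ℕ × ℕ =>
      ‖((2 ^ (p.1 + 1) * (I (p.1 + 1) - 1) : ℕ) : ℂ) *
        (((((p.2 : ℝ) + 1) ^ 2 * π ^ 2 * (I (p.1 + 2) : ℝ) ^ 2 : ℝ) : ℂ) ^ (-s))‖) ∧
    Summable (fun p : ℕ × ℕ =>
      ‖((2 ^ p.1 * (I (p.1 + 1) - 1) : ℕ) : ℂ) *
        (((((p.2 : ℝ) + 1) ^ 2 * π ^ 2 * (I (p.1 + 2) : ℝ) ^ 2 / 4 : ℝ) : ℂ) ^ (-s))‖) := by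
  have hI_succ (n : ℕ) : I (n + 1) = I n * j (n + 1) := by
    rw [hI, hI, Finset.prod_Icc_succ_top (by omega)]
  have hI_ge (n : ℕ) : 2 ^ n ≤ I n := hI n ▸ pow_le_prod_Icc_one hj n
  have hI_geR (n : ℕ) : (2 : ℝ) ^ n ≤ I n := by exact_mod_cast hI_ge n
  have hI_mono : Monotone I := monotone_nat_of_le_succ fun n =>
    hI_succ n ▸ Nat.le_mul_of_pos_right _ (by linarith [hj (n + 1) (by omega)])
  have hnorm_le {a b c : ℕ} (h : a ≤ 2 ^ b * c) : ‖(a : ℂ)‖ ≤ (2 : ℝ) ^ b * c := by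
    rw [Complex.norm_natCast]; exact_mod_cast h
  have hmult_le {a n : ℕ} (ha : a ≤ n + 2) : 2 ^ a * (I (n + 1) - 1) ≤ 2 ^ (n + 2) * I (n + 2) :=
    Nat.mul_le_mul (Nat.pow_le_pow_right two_pos ha) ((Nat.sub_le _ _).trans (hI_mono (by omega)))
  have hquarter (a b : ℝ) : a * π ^ 2 * b / 4 = a * (π ^ 2 / 4) * b := by ring
  refine ⟨?_, ?_, ?_, ?_, ?_⟩
  · refine (summable_nat_add_sq_mul_rpow_neg (C := π ^ 2) one_pos (by positivity)
      (by linarith : 1 < 2 * s.re)).congr fun k => ?_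
    rw [Complex.norm_cpow_eq_rpow_re_of_pos (by positivity), Complex.neg_re]
  · refine summable_norm_mul_cpow_neg_of_norm_le (m := fun n => (2 : ℂ) ^ (n + 1)) one_lt_two
      hI_geR 1 (fun n => ?_) (by norm_num) (by positivity) hs
    simpa using le_mul_of_one_le_right (by positivity : (0 : ℝ) ≤ 2 ^ (n + 1))
      (Nat.one_le_cast.2 (Nat.one_le_two_pow.trans (hI_ge (n + 1))))
  · refine summable_norm_mul_cpow_neg_of_norm_le
      (m := fun n => ((2 ^ n * (j (n + 1) - 2) * I n : ℕ) : ℂ)) one_lt_two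
      hI_geR 1 (fun n => hnorm_le ?_) one_pos (by positivity) hs
    calc 2 ^ n * (j (n + 1) - 2) * I n ≤ 2 ^ n * I (n + 1) := by
          rw [hI_succ, mul_assoc, mul_comm (I n)]; gcongr; omega
      _ ≤ 2 ^ (n + 1) * I (n + 1) := by gcongr <;> omega
  · exact summable_norm_mul_cpow_neg_of_norm_le
      (m := fun n => ((2 ^ (n + 1) * (I (n + 1) - 1) : ℕ) : ℂ)) one_lt_two
      hI_geR 2 (fun n => hnorm_le (hmult_le (by omega))) one_pos (by positivity) hs
  · simp only [hquarter]
    exact summable_norm_mul_cpow_neg_of_norm_le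
      (m := fun n => ((2 ^ n * (I (n + 1) - 1) : ℕ) : ℂ)) one_lt_two
      hI_geR 2 (fun n => hnorm_le (hmult_le (by omega))) one_pos (by positivity) hs
end

section
/- Let j : ℕ → ℕ (indexed from 1) satisfy j n ≥ 2 for all n ≥ 1, set I n = ∏_{i=1}^n j i, and let s ∈ ℂ with Re(s) > 1. Then Σ_{k≥1} (k²π²)^{−s} + Σ_{n≥1} 2^n Σ_{k≥0} ((k+1/2)²π²(I n)²)^{−s} + Σ_{n≥1} 2^{n−1}(j n − 2)·I(n−1) Σ_{k≥1} (k²π²(I n)²)^{−s} + Σ_{n≥2} 2^{n−1}(I(n−1) − 1) Σ_{k≥1} (k²π²(I n)²)^{−s} + Σ_{n≥2} 2^{n−2}(I(n−1) − 1) Σ_{k≥1} (k²π²(I n)²/4)^{−s} = (ζ(2s)/π^{2s}) · [ Σ_{n≥2} (2^{n−1}·I(n−1)·(2^{2s−1} + j n − 1) + 2^{n−1}·((3/2)·2^{2s} − 3)) / (I n)^{2s} + (2^{2s+1} − 4 + j 1)/(j 1)^{2s} + 1 ], where ζ denotes the Riemann zeta function and all complex powers are principal. -/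
/-!
Each eigenvalue family is a copy of one of three spectra on an interval, `(k+1)²π²`, `(k+½)²π²`
and `(k+1)²π²/4`, scaled by `a² = I n ²`, and scaling multiplies `λ^(-s)` by `a^(-2s)`. The three
interval zeta functions are `ζ(2s)/π^(2s)` times `1`, `2^(2s) - 1` (the odd integers: `ζ` minus
its even part `2^(-2s) ζ`) and `2^(2s)`. What remains is a Dirichlet series in the `I n`; it
converges absolutely for `Re s > 1` since the multiplicities are at most `I n ²` and `I n ≥ 2^n`.
Regrouping it by the denominator `I n ^ (2s)` leaves the `n = 1` terms as the `j 1` summand.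
-/

open Real

lemma ofReal_sq_cpow {x : ℝ} (hx : 0 ≤ x) (t : ℂ) : ((x ^ 2 : ℝ) : ℂ) ^ t = (x : ℂ) ^ (2 * t) := by
  have harg : (x : ℂ).arg = 0 := Complex.arg_ofReal_of_nonneg hx
  rw [Complex.cpow_ofNat_mul' (by simp [harg, pi_pos]) (by simp [harg, pi_pos.le]),
    Complex.ofReal_pow]

lemma ofReal_mul_sq_cpow_neg {x a : ℝ} (hx : 0 ≤ x) (ha : 0 ≤ a) (s : ℂ) :
    ((x * a ^ 2 : ℝ) : ℂ) ^ (-s) = (x : ℂ) ^ (-s) / (a : ℂ) ^ (2 * s) := by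
  rw [Complex.ofReal_mul, Complex.mul_cpow_ofReal_nonneg hx (by positivity), ofReal_sq_cpow ha,
    mul_neg, Complex.cpow_neg _ (2 * s), div_eq_mul_inv]

lemma tsum_ofReal_mul_sq_cpow_neg {x : ℕ → ℝ} (hx : ∀ k, 0 ≤ x k) {a : ℝ} (ha : 0 ≤ a) (s : ℂ) :
    ∑' k, ((x k * a ^ 2 : ℝ) : ℂ) ^ (-s) = (∑' k, (x k : ℂ) ^ (-s)) / (a : ℂ) ^ (2 * s) := by
  simp_rw [ofReal_mul_sq_cpow_neg (hx _) ha, tsum_div_const]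

lemma tsum_mul_tsum_ofReal_mul_sq_cpow_neg (c : ℕ → ℂ) {x : ℕ → ℝ} (hx : ∀ k, 0 ≤ x k)
    {a : ℕ → ℝ} (ha : ∀ n, 0 ≤ a n) (s : ℂ) :
    ∑' n, c n * ∑' k, ((x k * a n ^ 2 : ℝ) : ℂ) ^ (-s) =
      (∑' k, (x k : ℂ) ^ (-s)) * ∑' n, c n / (a n : ℂ) ^ (2 * s) := by
  simp_rw [tsum_ofReal_mul_sq_cpow_neg hx (ha _), ← tsum_mul_left, mul_div, mul_comm]

lemma summable_natCast_add_one_cpow_neg {w : ℂ} (hw : 1 < w.re) :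
    Summable fun k : ℕ => ((k : ℂ) + 1) ^ (-w) := by
  have := (summable_nat_add_iff 1).mpr (Complex.summable_one_div_nat_cpow.mpr hw)
  simpa [Complex.cpow_neg] using this

lemma tsum_natCast_add_one_cpow_neg {w : ℂ} (hw : 1 < w.re) :
    ∑' k : ℕ, ((k : ℂ) + 1) ^ (-w) = riemannZeta w := by
  simp [zeta_eq_tsum_one_div_nat_add_one_cpow hw, Complex.cpow_neg]

lemma tsum_two_mul_natCast_add_one_cpow_neg {w : ℂ} (hw : 1 < w.re) :
    ∑' k : ℕ, (2 * (k : ℂ) + 1) ^ (-w) = (1 - 2 ^ (-w)) * riemannZeta w := by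
  have hf := summable_natCast_add_one_cpow_neg hw
  have hsplit := tsum_even_add_odd (f := fun k : ℕ => ((k : ℂ) + 1) ^ (-w))
    (hf.comp_injective (fun a b h => by omega)) (hf.comp_injective (fun a b h => by omega))
  have hodd : ∀ k : ℕ, (((2 * k + 1 : ℕ) : ℂ) + 1) ^ (-w) = 2 ^ (-w) * ((k : ℂ) + 1) ^ (-w) := by
    intro k
    rw [show (((2 * k + 1 : ℕ) : ℂ) + 1) = ((2 : ℕ) : ℂ) * ((k + 1 : ℕ) : ℂ) by push_cast; ring,
      Complex.natCast_mul_natCast_cpow]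
    push_cast; rfl
  simp only [hodd, tsum_mul_left, tsum_natCast_add_one_cpow_neg hw, Nat.cast_mul,
    Nat.cast_ofNat] at hsplit
  linear_combination hsplit

lemma tsum_add_one_sq_mul_pi_sq_cpow_neg {s : ℂ} (hs : 1 < s.re) :
    ∑' k : ℕ, ((((k : ℝ) + 1) ^ 2 * π ^ 2 : ℝ) : ℂ) ^ (-s) = riemannZeta (2 * s) / π ^ (2 * s) := by
  rw [tsum_ofReal_mul_sq_cpow_neg (fun k => by positivity) pi_pos.le]
  simp (disch := positivity) only [ofReal_sq_cpow, mul_neg]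
  push_cast
  rw [tsum_natCast_add_one_cpow_neg (by simp; linarith)]

lemma one_div_two_cpow (w : ℂ) : (1 / 2 : ℂ) ^ w = (2 ^ w)⁻¹ := by
  simpa using Complex.inv_cpow_ofReal_nonneg (zero_le_two (α := ℝ)) w

lemma tsum_add_half_sq_mul_pi_sq_cpow_neg {s : ℂ} (hs : 1 < s.re) :
    ∑' k : ℕ, ((((k : ℝ) + 1 / 2) ^ 2 * π ^ 2 : ℝ) : ℂ) ^ (-s) =
      (2 ^ (2 * s) - 1) * (riemannZeta (2 * s) / π ^ (2 * s)) := by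
  have hsplit : ∀ k : ℕ, ((k : ℝ) + 1 / 2) ^ 2 * π ^ 2 = (2 * k + 1) ^ 2 * π ^ 2 * (1 / 2) ^ 2 :=
    fun k => by ring
  simp_rw [hsplit]
  rw [tsum_ofReal_mul_sq_cpow_neg (fun k => by positivity) (by norm_num),
    tsum_ofReal_mul_sq_cpow_neg (fun k => by positivity) pi_pos.le]
  simp (disch := positivity) only [ofReal_sq_cpow, mul_neg]
  push_cast
  rw [tsum_two_mul_natCast_add_one_cpow_neg (by simp; linarith), one_div_two_cpow,
    Complex.cpow_neg]
  field_simp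

lemma tsum_add_one_sq_mul_pi_sq_div_four_cpow_neg {s : ℂ} (hs : 1 < s.re) :
    ∑' k : ℕ, ((((k : ℝ) + 1) ^ 2 * π ^ 2 / 4 : ℝ) : ℂ) ^ (-s) =
      2 ^ (2 * s) * (riemannZeta (2 * s) / π ^ (2 * s)) := by
  have hsplit : ∀ k : ℕ, ((k : ℝ) + 1) ^ 2 * π ^ 2 / 4 = (k + 1) ^ 2 * π ^ 2 * (1 / 2) ^ 2 :=
    fun k => by ring
  simp_rw [hsplit]
  rw [tsum_ofReal_mul_sq_cpow_neg (fun k => by positivity) (by norm_num),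
    tsum_add_one_sq_mul_pi_sq_cpow_neg hs]
  push_cast
  rw [one_div_two_cpow]
  field_simp

lemma summable_natCast_div_natCast_cpow {b c : ℕ → ℕ} {w : ℂ} (hw : 2 < w.re)
    (hb : ∀ n, 2 ^ n ≤ b n) (hc : ∀ n, c n ≤ b n ^ 2) :
    Summable fun n => (c n : ℂ) / (b n : ℂ) ^ w := by
  have hb_pos : ∀ n, (0 : ℝ) < b n := fun n =>
    Nat.cast_pos.mpr ((Nat.pow_pos two_pos).trans_le (hb n))
  have hr : (2 : ℝ) ^ (2 - w.re) < 1 := rpow_lt_one_of_one_lt_of_neg one_lt_two (by linarith)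
  refine Summable.of_norm_bounded (summable_geometric_of_lt_one (by positivity) hr) fun n => ?_
  calc ‖(c n : ℂ) / (b n : ℂ) ^ w‖ = c n / (b n : ℝ) ^ w.re := by
        rw [norm_div, Complex.norm_natCast,
          Complex.norm_natCast_cpow_of_pos (Nat.cast_pos.mp (hb_pos n))]
    _ ≤ (b n : ℝ) ^ (2 : ℝ) / (b n : ℝ) ^ w.re := by
        gcongr
        exact_mod_cast hc n
    _ = (b n : ℝ) ^ (2 - w.re) := (rpow_sub (hb_pos n) _ _).symm
    _ ≤ ((2 : ℝ) ^ n) ^ (2 - w.re) :=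
        rpow_le_rpow_of_nonpos (by positivity) (by exact_mod_cast hb n) (by linarith)
    _ = ((2 : ℝ) ^ (2 - w.re)) ^ n := by
        rw [← rpow_natCast, ← rpow_natCast, ← rpow_mul zero_le_two, ← rpow_mul zero_le_two,
          mul_comm]

namespace Laakso

theorem two_pow_le {j I : ℕ → ℕ} (hj : ∀ n, 2 ≤ j (n + 1)) (hI0 : I 0 = 1)
    (hI : ∀ n, I (n + 1) = I n * j (n + 1)) (n : ℕ) : 2 ^ n ≤ I n := by
  induction n with
  | zero => simp [hI0]
  | succ n ih => rw [hI, pow_succ]; exact Nat.mul_le_mul ih (hj n)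

theorem monotone {j I : ℕ → ℕ} (hj : ∀ n, 2 ≤ j (n + 1)) (hI : ∀ n, I (n + 1) = I n * j (n + 1)) :
    Monotone I :=
  monotone_nat_of_le_succ fun n => by rw [hI]; exact Nat.le_mul_of_pos_right _ (by linarith [hj n])

theorem two_pow_mul_sub_two_mul_le {j I : ℕ → ℕ} (hj : ∀ n, 2 ≤ j (n + 1)) (hI0 : I 0 = 1)
    (hI : ∀ n, I (n + 1) = I n * j (n + 1)) (n : ℕ) :
    2 ^ n * (j (n + 1) - 2) * I n ≤ I (n + 1) ^ 2 :=
  calc 2 ^ n * (j (n + 1) - 2) * I n ≤ I (n + 1) * (j (n + 1) * I n) := by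
        rw [mul_assoc]
        gcongr
        · exact (two_pow_le hj hI0 hI n).trans (monotone hj hI n.le_succ)
        · exact Nat.sub_le _ _
    _ = I (n + 1) ^ 2 := by rw [hI]; ring

theorem two_pow_mul_sub_one_le {j I : ℕ → ℕ} (hj : ∀ n, 2 ≤ j (n + 1)) (hI0 : I 0 = 1)
    (hI : ∀ n, I (n + 1) = I n * j (n + 1)) (n : ℕ) :
    2 ^ (n + 1) * (I (n + 1) - 1) ≤ I (n + 2) ^ 2 :=
  calc 2 ^ (n + 1) * (I (n + 1) - 1) ≤ I (n + 2) * I (n + 2) := by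
        gcongr
        · exact (two_pow_le hj hI0 hI _).trans (monotone hj hI (n + 1).le_succ)
        · exact (Nat.sub_le _ _).trans (monotone hj hI (n + 1).le_succ)
    _ = I (n + 2) ^ 2 := (sq _).symm

theorem level_sum_eq {p q : ℕ} (hp : 1 ≤ p) (hq : 2 ≤ q) (n : ℕ) (w D : ℂ) :
    (2 ^ w - 1) * ((2 : ℂ) ^ (n + 2) / D) + ((2 ^ (n + 1) * (q - 2) * p : ℕ) : ℂ) / D
      + ((2 ^ (n + 1) * (p - 1) : ℕ) : ℂ) / D + 2 ^ w * (((2 ^ n * (p - 1) : ℕ) : ℂ) / D) =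
    ((2 : ℂ) ^ (n + 1) * p * ((2 : ℂ) ^ (w - 1) + q - 1) +
      (2 : ℂ) ^ (n + 1) * ((3 / 2) * (2 : ℂ) ^ w - 3)) / D := by
  push_cast [Nat.cast_sub hp, Nat.cast_sub hq]
  rw [Complex.cpow_sub _ _ two_ne_zero, Complex.cpow_one]
  ring

theorem tsum_levels_eq {j I : ℕ → ℕ} (hj : ∀ n, 2 ≤ j (n + 1)) (hI0 : I 0 = 1)
    (hI : ∀ n, I (n + 1) = I n * j (n + 1)) {w : ℂ} (hw : 2 < w.re) :
    (2 ^ w - 1) * ∑' n : ℕ, (2 : ℂ) ^ (n + 1) / (I (n + 1) : ℂ) ^ w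
      + ∑' n : ℕ, ((2 ^ n * (j (n + 1) - 2) * I n : ℕ) : ℂ) / (I (n + 1) : ℂ) ^ w
      + ∑' n : ℕ, ((2 ^ (n + 1) * (I (n + 1) - 1) : ℕ) : ℂ) / (I (n + 2) : ℂ) ^ w
      + 2 ^ w * ∑' n : ℕ, ((2 ^ n * (I (n + 1) - 1) : ℕ) : ℂ) / (I (n + 2) : ℂ) ^ w =
    (∑' n : ℕ, ((2 : ℂ) ^ (n + 1) * (I (n + 1) : ℂ) * ((2 : ℂ) ^ (w - 1) + (j (n + 2) : ℂ) - 1) +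
        (2 : ℂ) ^ (n + 1) * ((3 / 2) * (2 : ℂ) ^ w - 3)) / (I (n + 2) : ℂ) ^ w)
      + ((2 : ℂ) ^ (w + 1) - 4 + (j 1 : ℂ)) / (j 1 : ℂ) ^ w := by
  have hpow : ∀ k n, 2 ^ n ≤ I (n + k) := fun k n =>
    (Nat.pow_le_pow_right two_pos (n.le_add_right k)).trans (two_pow_le hj hI0 hI _)
  have h1 : Summable fun n : ℕ => (2 : ℂ) ^ (n + 1) / (I (n + 1) : ℂ) ^ w := by
    exact_mod_cast summable_natCast_div_natCast_cpow (c := fun n => 2 ^ (n + 1)) hw (hpow 1)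
      fun n => (two_pow_le hj hI0 hI _).trans (Nat.le_self_pow two_ne_zero _)
  have h2 := summable_natCast_div_natCast_cpow hw (hpow 1) (two_pow_mul_sub_two_mul_le hj hI0 hI)
  have h3 := summable_natCast_div_natCast_cpow hw (hpow 2) (two_pow_mul_sub_one_le hj hI0 hI)
  have h4 := summable_natCast_div_natCast_cpow hw (hpow 2) fun n =>
    (Nat.mul_le_mul_right _ (Nat.pow_le_pow_right two_pos n.le_succ)).trans
      (two_pow_mul_sub_one_le hj hI0 hI n)
  have hsum := ((((hasSum_nat_add_iff' 1).mpr h1.hasSum).mul_left (2 ^ w - 1)).add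
    ((hasSum_nat_add_iff' 1).mpr h2.hasSum)).add h3.hasSum |>.add (h4.hasSum.mul_left (2 ^ w))
  rw [← tsum_congr fun n => level_sum_eq (Nat.one_le_two_pow.trans (two_pow_le hj hI0 hI (n + 1)))
    (hj (n + 1)) n w ((I (n + 2) : ℂ) ^ w), hsum.tsum_eq]
  have hI1 : I 1 = j 1 := by rw [hI, hI0, one_mul]
  simp only [Finset.sum_range_one, zero_add, hI0, hI1]
  rw [Complex.cpow_add _ _ two_ne_zero, Complex.cpow_one]
  push_cast [Nat.cast_sub (hj 0)]
  ring

end Laakso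

/-- For `Re s > 1`, the spectral zeta function of the Laplacian on a general Laakso space
equals `(ζ(2s)/π^(2s)) · [ Σ_{n≥2} (2^{n−1} I_{n−1} (2^{2s−1} + j_n − 1)
+ 2^{n−1}((3/2)·2^{2s} − 3)) / I_n^{2s} + (2^{2s+1} − 4 + j_1)/j_1^{2s} + 1 ]`. -/
theorem laakso_spectral_zeta_formula
    (j : ℕ → ℕ) (hj : ∀ n, 1 ≤ n → 2 ≤ j n)
    (I : ℕ → ℕ) (hI : ∀ n, I n = ∏ i ∈ Finset.Icc 1 n, j i)
    (s : ℂ) (hs : 1 < s.re) :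
    (∑' k : ℕ, ((((k : ℝ) + 1) ^ 2 * π ^ 2 : ℝ) : ℂ) ^ (-s)) +
    (∑' n : ℕ, (2 : ℂ) ^ (n + 1) *
      ∑' k : ℕ, ((((k : ℝ) + 1 / 2) ^ 2 * π ^ 2 * (I (n + 1) : ℝ) ^ 2 : ℝ) : ℂ) ^ (-s)) +
    (∑' n : ℕ, ((2 ^ n * (j (n + 1) - 2) * I n : ℕ) : ℂ) *
      ∑' k : ℕ, ((((k : ℝ) + 1) ^ 2 * π ^ 2 * (I (n + 1) : ℝ) ^ 2 : ℝ) : ℂ) ^ (-s)) +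
    (∑' n : ℕ, ((2 ^ (n + 1) * (I (n + 1) - 1) : ℕ) : ℂ) *
      ∑' k : ℕ, ((((k : ℝ) + 1) ^ 2 * π ^ 2 * (I (n + 2) : ℝ) ^ 2 : ℝ) : ℂ) ^ (-s)) +
    (∑' n : ℕ, ((2 ^ n * (I (n + 1) - 1) : ℕ) : ℂ) *
      ∑' k : ℕ, ((((k : ℝ) + 1) ^ 2 * π ^ 2 * (I (n + 2) : ℝ) ^ 2 / 4 : ℝ) : ℂ) ^ (-s)) =
    (riemannZeta (2 * s) / (π : ℂ) ^ (2 * s)) *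
      ((∑' n : ℕ,
          ((2 : ℂ) ^ (n + 1) * (I (n + 1) : ℂ) * ((2 : ℂ) ^ (2 * s - 1) + (j (n + 2) : ℂ) - 1) +
            (2 : ℂ) ^ (n + 1) * ((3 / 2) * (2 : ℂ) ^ (2 * s) - 3)) / (I (n + 2) : ℂ) ^ (2 * s)) +
        ((2 : ℂ) ^ (2 * s + 1) - 4 + (j 1 : ℂ)) / (j 1 : ℂ) ^ (2 * s) + 1) := by
  have hj' : ∀ n, 2 ≤ j (n + 1) := fun n => hj (n + 1) n.succ_pos
  have hI0 : I 0 = 1 := by simp [hI]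
  have hIsucc : ∀ n, I (n + 1) = I n * j (n + 1) := fun n => by
    rw [hI, hI, Finset.prod_Icc_succ_top (Nat.le_add_left 1 n)]
  have hquarter (x y : ℝ) : x * π ^ 2 * y / 4 = x * π ^ 2 / 4 * y := mul_div_right_comm _ _ _
  simp only [hquarter]
  rw [tsum_mul_tsum_ofReal_mul_sq_cpow_neg _ (fun k => by positivity) (fun n => by positivity),
    tsum_mul_tsum_ofReal_mul_sq_cpow_neg _ (fun k => by positivity) (fun n => by positivity),
    tsum_mul_tsum_ofReal_mul_sq_cpow_neg _ (fun k => by positivity) (fun n => by positivity),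
    tsum_mul_tsum_ofReal_mul_sq_cpow_neg _ (fun k => by positivity) (fun n => by positivity),
    tsum_add_one_sq_mul_pi_sq_cpow_neg hs, tsum_add_half_sq_mul_pi_sq_cpow_neg hs,
    tsum_add_one_sq_mul_pi_sq_div_four_cpow_neg hs]
  simp only [Complex.ofReal_natCast]
  rw [← Laakso.tsum_levels_eq hj' hI0 hIsucc (by simp; linarith)]
  ring
end

section
/- Let j : ℕ → ℕ (indexed from 1) satisfy j n ≥ 2 for all n ≥ 1, set I n = ∏_{i=1}^n j i, and let t > 0. Then the family of terms (multiplicity)·exp(−λ·t), where λ ranges over the eigenvalues k²π² (k ≥ 0, multiplicity 1), (k+1/2)²π²(I n)² (k ≥ 0, n ≥ 1, multiplicity 2^n), k²π²(I n)² (k ≥ 1, n ≥ 1, multiplicity 2^{n−1}(j n − 2)·I(n−1)), k²π²(I n)² (k ≥ 1, n ≥ 2, multiplicity 2^{n−1}(I(n−1) − 1)), and k²π²(I n)²/4 (k ≥ 1, n ≥ 2, multiplicity 2^{n−2}(I(n−1) − 1)), is summable. Hence the trace of the heat kernel Z(t) = Σ (multiplicity)·exp(−λ·t) is a well-defined finite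 quantity for every t > 0. -/
/-!
In each two-parameter family, the multiplicity is at most `L²`, where `L = I n` is the scale of
the eigenvalue, and the eigenvalue with index `k` is at least `c (k + L²)` for `c = π² / 16`.
Since `I` is strictly increasing, each family is therefore dominated termwise by the product of
the subseries `∑ₙ (I n)² e^{-ct (I n)²}` of the convergent series `∑ₘ m² e^{-ct m²}` with the
geometric series `∑ₖ e^{-ct k}`.
-/

open Real Function

theorem summable_sq_mul_exp_neg_mul_sq {c : ℝ} (hc : 0 < c) :
    Summable fun m : ℕ => (m : ℝ) ^ 2 * exp (-c * m ^ 2) := by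
  refine (summable_pow_mul_exp_neg_nat_mul 2 hc).of_nonneg_of_le (fun m => by positivity)
    fun m => ?_
  have hm : (m : ℝ) ≤ (m : ℝ) ^ 2 := by exact_mod_cast Nat.le_self_pow two_ne_zero m
  exact mul_le_mul_of_nonneg_left (exp_le_exp.2 (by nlinarith)) (by positivity)

theorem exp_neg_sq_mul_le {x a t : ℝ} {L k : ℕ} (hL : 1 ≤ L) (hx : ((k : ℝ) + 1) / 2 ≤ x)
    (ha : 0 ≤ a) (ht : 0 ≤ t) :
    exp (-(x ^ 2 * a * L ^ 2) * t) ≤ exp (-(a * t / 4) * L ^ 2) * exp (-(a * t / 4) * k) := by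
  have hL' : (1 : ℝ) ≤ L := by exact_mod_cast hL
  have hk : (0 : ℝ) ≤ k := k.cast_nonneg
  have hx2 : ((k : ℝ) + 1) / 4 ≤ x ^ 2 := by nlinarith
  have hkL : (k : ℝ) ≤ k * L ^ 2 := le_mul_of_one_le_right hk (one_le_pow₀ hL')
  have hxL : ((k : ℝ) + L ^ 2) / 4 ≤ x ^ 2 * L ^ 2 := by
    nlinarith [mul_le_mul_of_nonneg_right hx2 (sq_nonneg (L : ℝ))]
  rw [← exp_add, exp_le_exp]
  nlinarith [mul_nonneg ha ht]

theorem summable_mul_exp_neg_sq_mul {s : ℕ → ℕ} (hs : Injective s) (hs1 : ∀ n, 1 ≤ s n)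
    {m : ℕ → ℝ} (hm0 : ∀ n, 0 ≤ m n) (hm : ∀ n, m n ≤ (s n : ℝ) ^ 2)
    {x : ℕ → ℝ} (hx : ∀ k : ℕ, ((k : ℝ) + 1) / 2 ≤ x k) {a t : ℝ} (ha : 0 < a) (ht : 0 < t) :
    Summable fun p : ℕ × ℕ => m p.1 * exp (-(x p.2 ^ 2 * a * (s p.1 : ℝ) ^ 2) * t) := by
  have hc : 0 < a * t / 4 := by positivity
  have hdom : Summable fun p : ℕ × ℕ =>
      ((s p.1 : ℝ) ^ 2 * exp (-(a * t / 4) * (s p.1 : ℝ) ^ 2)) * exp (-(a * t / 4) * p.2) := by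
    have hgeom := summable_pow_mul_exp_neg_nat_mul 0 hc
    simp only [pow_zero, one_mul] at hgeom
    exact ((summable_sq_mul_exp_neg_mul_sq hc).comp_injective hs).mul_of_nonneg hgeom
      (fun n => mul_nonneg (sq_nonneg _) (exp_nonneg _)) fun k => exp_nonneg _
  refine hdom.of_nonneg_of_le (fun p => mul_nonneg (hm0 _) (exp_nonneg _)) fun ⟨n, k⟩ => ?_
  dsimp only
  rw [mul_assoc ((s n : ℝ) ^ 2)]
  exact mul_le_mul (hm n) (exp_neg_sq_mul_le (hs1 n) (hx k) ha.le ht.le) (exp_nonneg _)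
    (by positivity)

namespace Laakso

variable {j I : ℕ → ℕ} (hj : ∀ n, 1 ≤ n → 2 ≤ j n) (hI : ∀ n, I n = ∏ i ∈ Finset.Icc 1 n, j i)
include hj hI

theorem two_pow_le_scale (n : ℕ) : 2 ^ n ≤ I n := by
  simpa [hI] using Finset.pow_card_le_prod (Finset.Icc 1 n) j 2
    fun i hi => hj i (Finset.mem_Icc.1 hi).1

omit hj in
theorem scale_succ (n : ℕ) : I (n + 1) = I n * j (n + 1) := by
  rw [hI, hI, Finset.prod_Icc_succ_top (by omega)]

theorem strictMono_scale : StrictMono I := by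
  refine strictMono_nat_of_lt_succ fun n => ?_
  rw [scale_succ hI]
  exact lt_mul_of_one_lt_right (Nat.one_le_two_pow.trans (two_pow_le_scale hj hI n))
    (hj (n + 1) (by omega))

theorem two_pow_mul_sub_two_mul_le_sq (n : ℕ) :
    2 ^ n * (j (n + 1) - 2) * I n ≤ I (n + 1) ^ 2 :=
  calc 2 ^ n * (j (n + 1) - 2) * I n
      ≤ I n * j (n + 1) * I (n + 1) :=
        Nat.mul_le_mul (Nat.mul_le_mul (two_pow_le_scale hj hI n) (Nat.sub_le _ _))
          ((strictMono_scale hj hI).monotone n.le_succ)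
    _ = I (n + 1) ^ 2 := by rw [← scale_succ hI, sq]

theorem two_pow_succ_mul_pred_le_sq (n : ℕ) :
    2 ^ (n + 1) * (I (n + 1) - 1) ≤ I (n + 2) ^ 2 := by
  have hle : I (n + 1) ≤ I (n + 2) := (strictMono_scale hj hI).monotone (n + 1).le_succ
  rw [sq]
  exact Nat.mul_le_mul ((two_pow_le_scale hj hI _).trans hle) ((Nat.sub_le _ _).trans hle)

end Laakso

/-- For every `t > 0`, the family `(multiplicity)·exp(−λt)` over the eigenvalues of the
Laplacian on a Laakso space is summable, so the heat-kernel trace `Z(t)` is well defined. -/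
theorem laakso_heat_trace_summable
    (j : ℕ → ℕ) (hj : ∀ n, 1 ≤ n → 2 ≤ j n)
    (I : ℕ → ℕ) (hI : ∀ n, I n = ∏ i ∈ Finset.Icc 1 n, j i)
    (t : ℝ) (ht : 0 < t) :
    Summable (fun k : ℕ => Real.exp (-((k : ℝ) ^ 2 * π ^ 2) * t)) ∧
    Summable (fun p : ℕ × ℕ => (2 : ℝ) ^ (p.1 + 1) *
      Real.exp (-(((p.2 : ℝ) + 1 / 2) ^ 2 * π ^ 2 * (I (p.1 + 1) : ℝ) ^ 2) * t)) ∧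
    Summable (fun p : ℕ × ℕ => ((2 ^ p.1 * (j (p.1 + 1) - 2) * I p.1 : ℕ) : ℝ) *
      Real.exp (-(((p.2 : ℝ) + 1) ^ 2 * π ^ 2 * (I (p.1 + 1) : ℝ) ^ 2) * t)) ∧
    Summable (fun p : ℕ × ℕ => ((2 ^ (p.1 + 1) * (I (p.1 + 1) - 1) : ℕ) : ℝ) *
      Real.exp (-(((p.2 : ℝ) + 1) ^ 2 * π ^ 2 * (I (p.1 + 2) : ℝ) ^ 2) * t)) ∧
    Summable (fun p : ℕ × ℕ => ((2 ^ p.1 * (I (p.1 + 1) - 1) : ℕ) : ℝ) *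
      Real.exp (-(((p.2 : ℝ) + 1) ^ 2 * π ^ 2 * (I (p.1 + 2) : ℝ) ^ 2 / 4) * t)) := by
  have hπ : 0 < π ^ 2 := by positivity
  have hpos (n : ℕ) : 1 ≤ I n := Nat.one_le_two_pow.trans (Laakso.two_pow_le_scale hj hI n)
  have hinj (d : ℕ) : Injective fun n => I (n + d) :=
    (Laakso.strictMono_scale hj hI).injective.comp (add_left_injective d)
  refine ⟨?_, ?_, ?_, ?_, ?_⟩
  · refine (summable_exp_nat_mul_of_ge (neg_lt_zero.2 (mul_pos hπ ht))
      (f := fun k : ℕ => (k : ℝ) ^ 2) fun k => ?_).congr fun k => by ring_nf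
    exact_mod_cast Nat.le_self_pow two_ne_zero k
  · refine summable_mul_exp_neg_sq_mul (m := fun n => 2 ^ (n + 1)) (x := fun k => k + 1 / 2)
      (hinj 1) (fun n => hpos _) (fun n => by positivity) (fun n => ?_) (fun k => by linarith)
      hπ ht
    exact_mod_cast (Laakso.two_pow_le_scale hj hI _).trans (Nat.le_self_pow two_ne_zero _)
  · exact summable_mul_exp_neg_sq_mul (m := fun n => ((2 ^ n * (j (n + 1) - 2) * I n : ℕ) : ℝ))
      (x := fun k => k + 1) (hinj 1) (fun n => hpos _) (fun n => by positivity)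
      (fun n => by exact_mod_cast Laakso.two_pow_mul_sub_two_mul_le_sq hj hI n)
      (fun k => by linarith) hπ ht
  · exact summable_mul_exp_neg_sq_mul (m := fun n => ((2 ^ (n + 1) * (I (n + 1) - 1) : ℕ) : ℝ))
      (x := fun k => k + 1) (hinj 2) (fun n => hpos _) (fun n => by positivity)
      (fun n => by exact_mod_cast Laakso.two_pow_succ_mul_pred_le_sq hj hI n)
      (fun k => by linarith) hπ ht
  · refine (summable_mul_exp_neg_sq_mul (m := fun n => ((2 ^ n * (I (n + 1) - 1) : ℕ) : ℝ))
      (x := fun k => k + 1) (hinj 2) (fun n => hpos _) (fun n => by positivity) (fun n => ?_)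
      (fun k => by linarith) (div_pos hπ four_pos) ht).congr fun p => by ring_nf
    have h2n : 2 ^ n ≤ 2 ^ (n + 1) := Nat.pow_le_pow_right two_pos n.le_succ
    exact_mod_cast (Nat.mul_le_mul_right _ h2n).trans (Laakso.two_pow_succ_mul_pred_le_sq hj hI n)
end

section
/- Let j n = 2 for all n ≥ 1, so that I n = 2^n, and let s ∈ ℂ with Re(s) > 1. Then the spectral zeta function of the associated Laakso space satisfies ζ_{L₂}(s) = (ζ(2s)/π^{2s}) · [ 4·(2^{2s−1} + 1)/(4^s·(4^s − 4)) + 3/4^s + (2^{2s+1} − 2)/4^s + 1 ], where ζ denotes the Riemann zeta function and all complex powers are principal. -/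
open Real

/-!
Each family of eigenvalues is `λ = x² · π² · 4^m` with `x` running over the positive integers or
over the positive half-integers. Summed over `x`, the integer case gives `ζ(2s) (π² 4^m)^{-s}`,
and the half-integer case gives `(4^s - 1) ζ(2s) (π² 4^m)^{-s}`: it is the ζ-series with parameter
`π² 4^{m-1}` with its terms of even `x` removed. Since the multiplicities are combinations of `2^n` and `4^n`,
the sum over the levels `n` is a combination of geometric series in `2/4^s` and `4/4^s`, which
converge because `‖4^s‖ > 4`.
-/

lemma Complex.ofReal_pow_cpow {x : ℝ} (hx : 0 ≤ x) (n : ℕ) (z : ℂ) :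
    ((x : ℂ) ^ n) ^ z = (x : ℂ) ^ (n * z) :=
  (cpow_nat_mul' (by simp [arg_ofReal_of_nonneg hx, pi_pos])
    (by simp [arg_ofReal_of_nonneg hx, pi_pos.le]) z).symm

lemma two_cpow_two_mul (s : ℂ) : (2 : ℂ) ^ (2 * s) = 4 ^ s := by
  have h := Complex.ofReal_pow_cpow (x := 2) (by norm_num) 2 s
  norm_num at h
  exact h.symm

lemma four_lt_norm_four_cpow {s : ℂ} (hs : 1 < s.re) : 4 < ‖(4 : ℂ) ^ s‖ := by
  rw [← Complex.ofReal_ofNat, Complex.norm_cpow_eq_rpow_re_of_pos (by norm_num)]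
  simpa using Real.rpow_lt_rpow_of_exponent_lt (by norm_num : (1 : ℝ) < 4) hs

lemma ofReal_pi_sq_mul_four_pow_cpow_neg (s : ℂ) (m : ℕ) :
    (((π ^ 2 * 4 ^ m : ℝ)) : ℂ) ^ (-s) = ((π : ℂ) ^ (2 * s) * ((4 : ℂ) ^ s) ^ m)⁻¹ := by
  rw [Complex.cpow_neg, Complex.ofReal_mul, Complex.mul_cpow_ofReal_nonneg (by positivity)
    (by positivity), Complex.ofReal_pow, Complex.ofReal_pow, Complex.ofReal_pow_cpow pi_pos.le,
    Complex.ofReal_pow_cpow (by norm_num), Complex.ofReal_ofNat, Complex.cpow_nat_mul 4,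
    Nat.cast_ofNat]

lemma hasSum_one_div_nat_add_one_cpow {w : ℂ} (hw : 1 < w.re) :
    HasSum (fun n : ℕ => 1 / ((n : ℂ) + 1) ^ w) (riemannZeta w) := by
  rw [zeta_eq_tsum_one_div_nat_add_one_cpow hw]
  exact Summable.hasSum <| by
    exact_mod_cast (summable_nat_add_iff 1).mpr (Complex.summable_one_div_nat_cpow.mpr hw)

lemma hasSum_sq_mul_cpow_neg {c : ℝ} (hc : 0 ≤ c) {s : ℂ} (hs : 1 / 2 < s.re) :
    HasSum (fun k : ℕ => ((((k : ℝ) + 1) ^ 2 * c : ℝ) : ℂ) ^ (-s))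
      (riemannZeta (2 * s) * (c : ℂ) ^ (-s)) := by
  have h2s : 1 < (2 * s).re := by
    simp only [Complex.mul_re, Complex.re_ofNat, Complex.im_ofNat, zero_mul, sub_zero]
    linarith
  refine ((hasSum_one_div_nat_add_one_cpow h2s).mul_right _).congr_fun fun k => ?_
  rw [Complex.ofReal_mul, Complex.mul_cpow_ofReal_nonneg (by positivity) hc, Complex.ofReal_pow,
    Complex.ofReal_pow_cpow (by positivity), Nat.cast_ofNat, mul_neg, Complex.cpow_neg, one_div]
  push_cast
  rfl

lemma hasSum_add_half_sq_mul_cpow_neg {c : ℝ} (hc : 0 ≤ c) {s : ℂ} (hs : 1 / 2 < s.re) :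
    HasSum (fun k : ℕ => ((((k : ℝ) + 1 / 2) ^ 2 * c : ℝ) : ℂ) ^ (-s))
      (((4 : ℂ) ^ s - 1) * riemannZeta (2 * s) * (c : ℂ) ^ (-s)) := by
  -- `(2k + 1)² (c/4) = (k + 1/2)² c` and `(2k + 2)² (c/4) = (k + 1)² c`
  set F := fun k : ℕ => ((((k : ℝ) + 1) ^ 2 * (c / 4) : ℝ) : ℂ) ^ (-s)
  have hall : HasSum F (riemannZeta (2 * s) * ((c / 4 : ℝ) : ℂ) ^ (-s)) :=
    hasSum_sq_mul_cpow_neg (by positivity) hs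
  have hodd : HasSum (fun k => F (2 * k + 1)) (riemannZeta (2 * s) * (c : ℂ) ^ (-s)) := by
    convert hasSum_sq_mul_cpow_neg hc hs using 4 with k
    push_cast
    ring
  have heven : (fun k => F (2 * k)) =
      fun k : ℕ => ((((k : ℝ) + 1 / 2) ^ 2 * c : ℝ) : ℂ) ^ (-s) := by
    funext k
    simp only [F]
    push_cast
    ring_nf
  have hsumm : Summable fun k => F (2 * k) :=
    hall.summable.comp_injective (mul_right_injective₀ (two_ne_zero' ℕ))
  have hsplit := (hsumm.hasSum.even_add_odd hodd).unique hall
  have hquarter : ((c / 4 : ℝ) : ℂ) ^ (-s) = (c : ℂ) ^ (-s) * (4 : ℂ) ^ s := by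
    rw [Complex.ofReal_div, Complex.div_cpow_ofReal_nonneg hc (by norm_num), Complex.ofReal_ofNat,
      Complex.cpow_neg 4 s, div_inv_eq_mul]
  have hval : ∑' k, F (2 * k) = ((4 : ℂ) ^ s - 1) * riemannZeta (2 * s) * (c : ℂ) ^ (-s) := by
    rw [hquarter] at hsplit
    linear_combination hsplit
  rw [← heven, ← hval]
  exact hsumm.hasSum

lemma hasSum_div_pow_succ {K : Type*} [NormedField K] {a b : K} (h : ‖b‖ < ‖a‖) :
    HasSum (fun n : ℕ => (b / a) ^ (n + 1)) (b / (a - b)) := by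
  have ha : a ≠ 0 := norm_pos_iff.mp ((norm_nonneg b).trans_lt h)
  have hab : a - b ≠ 0 := sub_ne_zero.mpr fun hab => by simp [hab] at h
  have hr : ‖b / a‖ < 1 := by rwa [norm_div, div_lt_one (norm_pos_iff.mpr ha)]
  have hsum : b / (a - b) = b / a * (1 - b / a)⁻¹ := by field_simp
  simpa only [hsum, pow_succ'] using (hasSum_geometric_of_norm_lt_one hr).mul_left (b / a)

lemma hasSum_four_div_pow_succ_sub_two_div_pow_succ {a : ℂ} (ha : 4 < ‖a‖) :
    HasSum (fun n : ℕ => (4 / a) ^ (n + 1) - (2 / a) ^ (n + 1)) (4 / (a - 4) - 2 / (a - 2)) := by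
  have h4 : ‖(4 : ℂ)‖ < ‖a‖ := by norm_num; linarith
  have h2 : ‖(2 : ℂ)‖ < ‖a‖ := by norm_num; linarith
  exact (hasSum_div_pow_succ h4).sub (hasSum_div_pow_succ h2)

lemma natCast_two_pow_mul_two_pow_sub_one {R : Type*} [Ring R] (m n : ℕ) :
    ((2 ^ m * (2 ^ n - 1) : ℕ) : R) = 2 ^ m * 2 ^ n - 2 ^ m := by
  push_cast [Nat.one_le_two_pow]
  exact mul_sub_one _ _

namespace Laakso

variable {s : ℂ}

lemma tsum_cpow_neg_integer_modes (hs : 1 / 2 < s.re) (m : ℕ) :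
    ∑' k : ℕ, ((((k : ℝ) + 1) ^ 2 * (π ^ 2 * 4 ^ m) : ℝ) : ℂ) ^ (-s) =
      riemannZeta (2 * s) / ((π : ℂ) ^ (2 * s) * ((4 : ℂ) ^ s) ^ m) := by
  rw [(hasSum_sq_mul_cpow_neg (by positivity) hs).tsum_eq, ofReal_pi_sq_mul_four_pow_cpow_neg,
    div_eq_mul_inv]

lemma tsum_cpow_neg_half_integer_modes (hs : 1 / 2 < s.re) (m : ℕ) :
    ∑' k : ℕ, ((((k : ℝ) + 1 / 2) ^ 2 * (π ^ 2 * 4 ^ m) : ℝ) : ℂ) ^ (-s) =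
      ((4 : ℂ) ^ s - 1) * riemannZeta (2 * s) / ((π : ℂ) ^ (2 * s) * ((4 : ℂ) ^ s) ^ m) := by
  rw [(hasSum_add_half_sq_mul_cpow_neg (by positivity) hs).tsum_eq,
    ofReal_pi_sq_mul_four_pow_cpow_neg, div_eq_mul_inv]

lemma tsum_cpow_neg_level_zero (hs : 1 / 2 < s.re) :
    ∑' k : ℕ, ((((k : ℝ) + 1) ^ 2 * π ^ 2 : ℝ) : ℂ) ^ (-s) =
      riemannZeta (2 * s) / (π : ℂ) ^ (2 * s) := by
  simpa using tsum_cpow_neg_integer_modes hs 0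

lemma tsum_cpow_neg_half_integer_levels (hs : 1 < s.re) :
    ∑' n : ℕ, (2 : ℂ) ^ (n + 1) *
      ∑' k : ℕ, ((((k : ℝ) + 1 / 2) ^ 2 * π ^ 2 * (4 : ℝ) ^ (n + 1) : ℝ) : ℂ) ^ (-s) =
      ((4 : ℂ) ^ s - 1) * (riemannZeta (2 * s) / (π : ℂ) ^ (2 * s)) *
        (2 / ((4 : ℂ) ^ s - 2)) := by
  have hterm : ∀ n : ℕ, (2 : ℂ) ^ (n + 1) *
      ∑' k : ℕ, ((((k : ℝ) + 1 / 2) ^ 2 * π ^ 2 * (4 : ℝ) ^ (n + 1) : ℝ) : ℂ) ^ (-s) =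
      ((4 : ℂ) ^ s - 1) * (riemannZeta (2 * s) / (π : ℂ) ^ (2 * s)) *
        (2 / (4 : ℂ) ^ s) ^ (n + 1) := by
    intro n
    simp_rw [mul_assoc _ (π ^ 2)]
    rw [tsum_cpow_neg_half_integer_modes (by linarith) (n + 1), div_pow]
    field_simp
  have h2 : ‖(2 : ℂ)‖ < ‖(4 : ℂ) ^ s‖ := by norm_num; linarith [four_lt_norm_four_cpow hs]
  rw [tsum_congr hterm, ((hasSum_div_pow_succ h2).mul_left _).tsum_eq]

lemma tsum_cpow_neg_integer_levels (hs : 1 < s.re) :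
    ∑' n : ℕ, ((2 ^ (n + 1) * (2 ^ (n + 1) - 1) : ℕ) : ℂ) *
      ∑' k : ℕ, ((((k : ℝ) + 1) ^ 2 * π ^ 2 * (4 : ℝ) ^ (n + 2) : ℝ) : ℂ) ^ (-s) =
      riemannZeta (2 * s) / ((π : ℂ) ^ (2 * s) * (4 : ℂ) ^ s) *
        (4 / ((4 : ℂ) ^ s - 4) - 2 / ((4 : ℂ) ^ s - 2)) := by
  have ha : (4 : ℂ) ^ s ≠ 0 := norm_pos_iff.mp (by linarith [four_lt_norm_four_cpow hs])
  have hterm : ∀ n : ℕ, ((2 ^ (n + 1) * (2 ^ (n + 1) - 1) : ℕ) : ℂ) *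
      ∑' k : ℕ, ((((k : ℝ) + 1) ^ 2 * π ^ 2 * (4 : ℝ) ^ (n + 2) : ℝ) : ℂ) ^ (-s) =
      riemannZeta (2 * s) / ((π : ℂ) ^ (2 * s) * (4 : ℂ) ^ s) *
        ((4 / (4 : ℂ) ^ s) ^ (n + 1) - (2 / (4 : ℂ) ^ s) ^ (n + 1)) := by
    intro n
    simp_rw [mul_assoc _ (π ^ 2)]
    rw [tsum_cpow_neg_integer_modes (by linarith) (n + 2), natCast_two_pow_mul_two_pow_sub_one,
      div_pow, div_pow, show (4 : ℂ) ^ (n + 1) = 2 ^ (n + 1) * 2 ^ (n + 1) by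
        rw [← mul_pow]; norm_num]
    field_simp
    ring
  rw [tsum_congr hterm,
    ((hasSum_four_div_pow_succ_sub_two_div_pow_succ (four_lt_norm_four_cpow hs)).mul_left _).tsum_eq]

lemma tsum_cpow_neg_halved_levels (hs : 1 < s.re) :
    ∑' n : ℕ, ((2 ^ n * (2 ^ (n + 1) - 1) : ℕ) : ℂ) *
      ∑' k : ℕ, ((((k : ℝ) + 1) ^ 2 * π ^ 2 * (4 : ℝ) ^ (n + 2) / 4 : ℝ) : ℂ) ^ (-s) =
      riemannZeta (2 * s) / (2 * (π : ℂ) ^ (2 * s)) *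
        (4 / ((4 : ℂ) ^ s - 4) - 2 / ((4 : ℂ) ^ s - 2)) := by
  have ha : (4 : ℂ) ^ s ≠ 0 := norm_pos_iff.mp (by linarith [four_lt_norm_four_cpow hs])
  have hterm : ∀ n : ℕ, ((2 ^ n * (2 ^ (n + 1) - 1) : ℕ) : ℂ) *
      ∑' k : ℕ, ((((k : ℝ) + 1) ^ 2 * π ^ 2 * (4 : ℝ) ^ (n + 2) / 4 : ℝ) : ℂ) ^ (-s) =
      riemannZeta (2 * s) / (2 * (π : ℂ) ^ (2 * s)) *
        ((4 / (4 : ℂ) ^ s) ^ (n + 1) - (2 / (4 : ℂ) ^ s) ^ (n + 1)) := by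
    intro n
    have hrescale : ∀ k : ℕ, ((k : ℝ) + 1) ^ 2 * π ^ 2 * 4 ^ (n + 2) / 4 =
        ((k : ℝ) + 1) ^ 2 * (π ^ 2 * 4 ^ (n + 1)) := fun k => by ring
    simp_rw [hrescale]
    rw [tsum_cpow_neg_integer_modes (by linarith) (n + 1), natCast_two_pow_mul_two_pow_sub_one,
      div_pow, div_pow, show (4 : ℂ) ^ (n + 1) = 2 ^ (n + 1) * 2 ^ (n + 1) by
        rw [← mul_pow]; norm_num]
    field_simp
    ring
  rw [tsum_congr hterm,
    ((hasSum_four_div_pow_succ_sub_two_div_pow_succ (four_lt_norm_four_cpow hs)).mul_left _).tsum_eq]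

end Laakso

/-- For `Re s > 1`, the spectral zeta function of the `j = 2` Laakso space (where
`I n = 2^n`, so the loop family is absent) equals
`(ζ(2s)/π^(2s)) · [4(2^{2s−1}+1)/(4^s(4^s−4)) + 3/4^s + (2^{2s+1}−2)/4^s + 1]`. -/
theorem laakso_spectral_zeta_j2
    (s : ℂ) (hs : 1 < s.re) :
    (∑' k : ℕ, ((((k : ℝ) + 1) ^ 2 * π ^ 2 : ℝ) : ℂ) ^ (-s)) +
    (∑' n : ℕ, (2 : ℂ) ^ (n + 1) *
      ∑' k : ℕ, ((((k : ℝ) + 1 / 2) ^ 2 * π ^ 2 * (4 : ℝ) ^ (n + 1) : ℝ) : ℂ) ^ (-s)) +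
    (∑' n : ℕ, ((2 ^ (n + 1) * (2 ^ (n + 1) - 1) : ℕ) : ℂ) *
      ∑' k : ℕ, ((((k : ℝ) + 1) ^ 2 * π ^ 2 * (4 : ℝ) ^ (n + 2) : ℝ) : ℂ) ^ (-s)) +
    (∑' n : ℕ, ((2 ^ n * (2 ^ (n + 1) - 1) : ℕ) : ℂ) *
      ∑' k : ℕ, ((((k : ℝ) + 1) ^ 2 * π ^ 2 * (4 : ℝ) ^ (n + 2) / 4 : ℝ) : ℂ) ^ (-s)) =
    (riemannZeta (2 * s) / (π : ℂ) ^ (2 * s)) *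
      (4 * ((2 : ℂ) ^ (2 * s - 1) + 1) / ((4 : ℂ) ^ s * ((4 : ℂ) ^ s - 4)) +
        3 / (4 : ℂ) ^ s + ((2 : ℂ) ^ (2 * s + 1) - 2) / (4 : ℂ) ^ s + 1) := by
  have ha := four_lt_norm_four_cpow hs
  have ha0 : (4 : ℂ) ^ s ≠ 0 := norm_pos_iff.mp (by linarith)
  have ha2 : (4 : ℂ) ^ s - 2 ≠ 0 := fun h => by rw [sub_eq_zero.mp h] at ha; norm_num at ha
  have ha4 : (4 : ℂ) ^ s - 4 ≠ 0 := fun h => by rw [sub_eq_zero.mp h] at ha; norm_num at ha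
  have hπ : (π : ℂ) ^ (2 * s) ≠ 0 := by simp [Complex.cpow_eq_zero_iff, pi_ne_zero]
  rw [Laakso.tsum_cpow_neg_level_zero (by linarith), Laakso.tsum_cpow_neg_half_integer_levels hs,
    Laakso.tsum_cpow_neg_integer_levels hs, Laakso.tsum_cpow_neg_halved_levels hs,
    Complex.cpow_sub _ _ two_ne_zero, Complex.cpow_add _ _ two_ne_zero, two_cpow_two_mul,
    Complex.cpow_one]
  field_simp
  ring
end

section
/- Let j : ℕ → ℕ (indexed from 1) be the alternating sequence with j n = 2 for odd n and j n = 3 for even n, so that I_{2k} = 6^k and I_{2k+1} = 2·6^k, and let s ∈ ℂ with Re(s) > 1. Then the spectral zeta function of the associated Laakso space satisfies ζ_L(s) = (ζ(2s)/π^{2s}) · [ ((2^{2s} + 4)/12 + (2^{2s−1} + 1)/2^{2s}) · 24/(6^{2s} − 24) + (3·2^{2s} − 6 + (6·2^{2s} − 12)/2^{2s})/(6^{2s} − 4) + (2^{2s+1} − 2)/2^{2s} + 1 ], where ζ denotes the Riemann zeta function and all complex powers are principal. -/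
/-!
For each eigenvalue family the sum over `k` is a Dirichlet series in `k + 1` or `k + 1/2`, giving
`ζ(2s)` or `(2^{2s} - 1) ζ(2s)` times `(π I_n)^{-2s}`. Since `I_{2k} = 6^k` and `I_{2k+1} = 2·6^k`,
splitting the remaining sums over `n` by parity leaves geometric series of ratios `4 / 6^{2s}` and
`24 / 6^{2s}`, both of norm `< 1` when `Re s > 1`; summing them is then field arithmetic.
-/

open Real

lemma prod_Icc_two_mul_eq_six_pow {j : ℕ → ℕ} (hodd : ∀ n, Odd n → j n = 2)
    (heven : ∀ n, 1 ≤ n → Even n → j n = 3) (k : ℕ) :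
    ∏ i ∈ Finset.Icc 1 (2 * k), j i = 6 ^ k := by
  induction k with
  | zero => simp
  | succ k ih =>
    rw [show 2 * (k + 1) = 2 * k + 1 + 1 by ring, Finset.prod_Icc_succ_top (by omega),
      Finset.prod_Icc_succ_top (by omega), ih, hodd _ (by simp),
      heven _ (by omega) (by simp [parity_simps])]
    ring

lemma prod_Icc_two_mul_add_one_eq_two_mul_six_pow {j : ℕ → ℕ} (hodd : ∀ n, Odd n → j n = 2)
    (heven : ∀ n, 1 ≤ n → Even n → j n = 3) (k : ℕ) :
    ∏ i ∈ Finset.Icc 1 (2 * k + 1), j i = 2 * 6 ^ k := by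
  rw [Finset.prod_Icc_succ_top (by omega), prod_Icc_two_mul_eq_six_pow hodd heven,
    hodd _ (by simp), mul_comm]

lemma ofReal_sq_cpow_neg {x : ℝ} (hx : 0 ≤ x) (s : ℂ) :
    ((x ^ 2 : ℝ) : ℂ) ^ (-s) = ((x : ℂ) ^ (2 * s))⁻¹ := by
  rw [Complex.cpow_neg, sq, Complex.ofReal_mul, Complex.mul_cpow_ofReal_nonneg hx hx,
    ← sq, ← Complex.cpow_nat_mul]
  norm_num

lemma two_mul_ofReal_cpow {x : ℝ} (hx : 0 ≤ x) (w : ℂ) :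
    (2 * (x : ℂ)) ^ w = 2 ^ w * (x : ℂ) ^ w := by
  simpa using Complex.mul_cpow_ofReal_nonneg zero_le_two hx w

lemma tsum_ofReal_add_sq_mul_pi_sq_mul_sq_cpow_neg {t c : ℝ} (ht : 0 ≤ t) (hc : 0 ≤ c) (s : ℂ) :
    ∑' k : ℕ, ((((k : ℝ) + t) ^ 2 * π ^ 2 * c ^ 2 : ℝ) : ℂ) ^ (-s) =
      (∑' k : ℕ, (((k : ℂ) + t) ^ (2 * s))⁻¹) / (π : ℂ) ^ (2 * s) / (c : ℂ) ^ (2 * s) := by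
  rw [← tsum_div_const, ← tsum_div_const]
  refine tsum_congr fun k => ?_
  have hk : 0 ≤ (k : ℝ) + t := by positivity
  rw [← mul_pow, ← mul_pow, ofReal_sq_cpow_neg (by positivity), Complex.ofReal_mul,
    Complex.mul_cpow_ofReal_nonneg (by positivity) hc, Complex.ofReal_mul,
    Complex.mul_cpow_ofReal_nonneg hk pi_pos.le]
  push_cast
  field_simp

lemma tsum_inv_natCast_add_one_cpow {w : ℂ} (hw : 1 < w.re) :
    ∑' k : ℕ, (((k : ℂ) + 1) ^ w)⁻¹ = riemannZeta w := by
  simp [zeta_eq_tsum_one_div_nat_add_one_cpow hw]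

/-- In `ζ(w) = ∑ (n + 1)⁻ʷ` the odd `n` contribute `2⁻ʷ ζ(w)` and the even ones
`2⁻ʷ ∑ (k + 1/2)⁻ʷ`. -/
lemma tsum_inv_natCast_add_half_cpow {w : ℂ} (hw : 1 < w.re) :
    ∑' k : ℕ, (((k : ℂ) + 1 / 2) ^ w)⁻¹ = (2 ^ w - 1) * riemannZeta w := by
  set f : ℕ → ℂ := fun n => (((n : ℂ) + 1) ^ w)⁻¹
  have hf : Summable f := by
    simpa [f, one_div] using (summable_nat_add_iff 1).2 (Complex.summable_one_div_nat_cpow.2 hw)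
  have hodd : ∀ k, f (2 * k + 1) = (2 ^ w)⁻¹ * f k := fun k => by
    have h := two_mul_ofReal_cpow (x := (k : ℝ) + 1) (by positivity) w
    push_cast at h
    rw [← mul_inv, ← h]
    simp only [f]
    push_cast
    ring_nf
  have heven : ∀ k, f (2 * k) = (2 ^ w)⁻¹ * (((k : ℂ) + 1 / 2) ^ w)⁻¹ := fun k => by
    have h := two_mul_ofReal_cpow (x := (k : ℝ) + 1 / 2) (by positivity) w
    push_cast at h
    rw [← mul_inv, ← h]
    simp only [f]
    push_cast
    ring_nf
  have hsplit := tsum_even_add_odd (hf.comp_injective (fun a b h => by omega))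
    (hf.comp_injective (fun a b h => by omega))
  rw [tsum_congr heven, tsum_congr hodd, tsum_mul_left, tsum_mul_left,
    tsum_inv_natCast_add_one_cpow hw] at hsplit
  have h2 : (2 : ℂ) ^ w * (2 ^ w)⁻¹ = 1 := mul_inv_cancel₀ (by simp)
  linear_combination (2 ^ w) * hsplit -
    (∑' k : ℕ, (((k : ℂ) + 1 / 2) ^ w)⁻¹ + riemannZeta w) * h2

lemma tsum_succ_sq_mul_pi_sq_mul_sq_cpow_neg {c : ℝ} (hc : 0 ≤ c) {s : ℂ} (hs : 1 < s.re) :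
    ∑' k : ℕ, ((((k : ℝ) + 1) ^ 2 * π ^ 2 * c ^ 2 : ℝ) : ℂ) ^ (-s) =
      riemannZeta (2 * s) / (π : ℂ) ^ (2 * s) / (c : ℂ) ^ (2 * s) := by
  rw [tsum_ofReal_add_sq_mul_pi_sq_mul_sq_cpow_neg zero_le_one hc, Complex.ofReal_one,
    tsum_inv_natCast_add_one_cpow (by simpa using by linarith)]

lemma tsum_add_half_sq_mul_pi_sq_mul_sq_cpow_neg {c : ℝ} (hc : 0 ≤ c) {s : ℂ} (hs : 1 < s.re) :
    ∑' k : ℕ, ((((k : ℝ) + 1 / 2) ^ 2 * π ^ 2 * c ^ 2 : ℝ) : ℂ) ^ (-s) =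
      (2 ^ (2 * s) - 1) * riemannZeta (2 * s) / (π : ℂ) ^ (2 * s) / (c : ℂ) ^ (2 * s) := by
  rw [tsum_ofReal_add_sq_mul_pi_sq_mul_sq_cpow_neg (by norm_num) hc, Complex.ofReal_div,
    Complex.ofReal_one, Complex.ofReal_ofNat,
    tsum_inv_natCast_add_half_cpow (by simpa using by linarith)]

lemma tsum_succ_sq_mul_pi_sq_mul_sq_div_four_cpow_neg {c : ℝ} (hc : 0 ≤ c) {s : ℂ}
    (hs : 1 < s.re) :
    ∑' k : ℕ, ((((k : ℝ) + 1) ^ 2 * π ^ 2 * c ^ 2 / 4 : ℝ) : ℂ) ^ (-s) =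
      2 ^ (2 * s) * riemannZeta (2 * s) / (π : ℂ) ^ (2 * s) / (c : ℂ) ^ (2 * s) := by
  simp_rw [show ∀ x : ℝ, x ^ 2 * π ^ 2 * c ^ 2 / 4 = x ^ 2 * π ^ 2 * (c / 2) ^ 2 by intro; ring]
  rw [tsum_succ_sq_mul_pi_sq_mul_sq_cpow_neg (by positivity) hs, Complex.ofReal_div,
    Complex.div_cpow_ofReal_nonneg hc zero_le_two, Complex.ofReal_ofNat]
  field_simp

lemma hasSum_of_even_odd_geometric {K : Type*} [NormedDivisionRing K] {f : ℕ → K} {a b r : K}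
    (hr : ‖r‖ < 1) (he : ∀ k, f (2 * k) = a * r ^ k) (ho : ∀ k, f (2 * k + 1) = b * r ^ k) :
    HasSum f ((a + b) * (1 - r)⁻¹) := by
  have hg := hasSum_geometric_of_norm_lt_one hr
  rw [add_mul]
  exact ((hg.mul_left a).congr_fun he).even_add_odd ((hg.mul_left b).congr_fun ho)

lemma hasSum_of_even_odd_geometric₂ {K : Type*} [NormedDivisionRing K] {f : ℕ → K}
    {a₁ a₂ b₁ b₂ r₁ r₂ : K} (hr₁ : ‖r₁‖ < 1) (hr₂ : ‖r₂‖ < 1)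
    (he : ∀ k, f (2 * k) = a₁ * r₁ ^ k + a₂ * r₂ ^ k)
    (ho : ∀ k, f (2 * k + 1) = b₁ * r₁ ^ k + b₂ * r₂ ^ k) :
    HasSum f ((a₁ + b₁) * (1 - r₁)⁻¹ + (a₂ + b₂) * (1 - r₂)⁻¹) := by
  have hg₁ := hasSum_geometric_of_norm_lt_one hr₁
  have hg₂ := hasSum_geometric_of_norm_lt_one hr₂
  rw [add_mul, add_mul, add_add_add_comm]
  exact (((hg₁.mul_left a₁).add (hg₂.mul_left a₂)).congr_fun he).even_add_odd
    (((hg₁.mul_left b₁).add (hg₂.mul_left b₂)).congr_fun ho)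

lemma sub_ne_zero_of_norm_div_lt_one {K : Type*} [NormedDivisionRing K] {a b : K} (ha : a ≠ 0)
    (h : ‖a / b‖ < 1) : b - a ≠ 0 := by
  intro hab
  rw [sub_eq_zero.1 hab, div_self ha, norm_one] at h
  exact h.false

lemma norm_div_six_cpow_lt_one {s : ℂ} (hs : 1 < s.re) {c : ℂ} (hc : ‖c‖ ≤ 36) :
    ‖c / (6 : ℂ) ^ (2 * s)‖ < 1 := by
  have h36 : (36 : ℝ) < ‖(6 : ℂ) ^ (2 * s)‖ := by
    rw [show (6 : ℂ) = ((6 : ℝ) : ℂ) by norm_num, Complex.norm_cpow_eq_rpow_re_of_pos (by norm_num)]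
    calc (36 : ℝ) = 6 ^ (2 : ℝ) := by norm_num
      _ < 6 ^ (2 * s).re := Real.rpow_lt_rpow_of_exponent_lt (by norm_num) (by simp; linarith)
  rw [norm_div, div_lt_one (by linarith)]
  linarith

lemma natCast_pow_cpow (n k : ℕ) (w : ℂ) : ((n ^ k : ℕ) : ℂ) ^ w = ((n : ℂ) ^ w) ^ k := by
  rw [Nat.cast_pow, ← Complex.natCast_cpow_natCast_mul, Complex.cpow_nat_mul]

lemma natCast_two_mul_pow_cpow (n k : ℕ) (w : ℂ) :
    ((2 * n ^ k : ℕ) : ℂ) ^ w = 2 ^ w * ((n : ℂ) ^ w) ^ k := by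
  rw [Nat.cast_mul, Complex.natCast_mul_natCast_cpow, natCast_pow_cpow, Nat.cast_ofNat]

section ScaleSums

variable {I : ℕ → ℕ} {w : ℂ}

lemma tsum_two_pow_succ_mul_div_cpow (hIe : ∀ k, I (2 * k) = 6 ^ k)
    (hIo : ∀ k, I (2 * k + 1) = 2 * 6 ^ k) (hr : ‖4 / (6 : ℂ) ^ w‖ < 1) (K : ℂ) :
    ∑' n : ℕ, (2 : ℂ) ^ (n + 1) * (K / (I (n + 1) : ℂ) ^ w) =
      (2 * K / 2 ^ w + 4 * K / 6 ^ w) * (1 - 4 / 6 ^ w)⁻¹ := by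
  refine (hasSum_of_even_odd_geometric hr (fun k => ?_) (fun k => ?_)).tsum_eq
  · rw [hIo, natCast_two_mul_pow_cpow, pow_succ, pow_mul]
    norm_num
    ring
  · rw [show 2 * k + 1 + 1 = 2 * (k + 1) by ring, hIe, natCast_pow_cpow, pow_mul]
    norm_num
    ring

lemma tsum_two_pow_mul_sub_two_mul_div_cpow {j : ℕ → ℕ} (hodd : ∀ n, Odd n → j n = 2)
    (heven : ∀ n, 1 ≤ n → Even n → j n = 3) (hIe : ∀ k, I (2 * k) = 6 ^ k)
    (hIo : ∀ k, I (2 * k + 1) = 2 * 6 ^ k) (hr : ‖24 / (6 : ℂ) ^ w‖ < 1) (K : ℂ) :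
    ∑' n : ℕ, ((2 ^ n * (j (n + 1) - 2) * I n : ℕ) : ℂ) * (K / (I (n + 1) : ℂ) ^ w) =
      4 * K / 6 ^ w * (1 - 24 / 6 ^ w)⁻¹ := by
  rw [← zero_add (4 * K / 6 ^ w)]
  refine (hasSum_of_even_odd_geometric hr (fun k => ?_) (fun k => ?_)).tsum_eq
  · simp [hodd (2 * k + 1) (by simp)]
  · rw [heven (2 * k + 1 + 1) (by omega) (by simp [parity_simps]), hIo,
      show 2 * k + 1 + 1 = 2 * (k + 1) by ring, hIe, natCast_pow_cpow]
    push_cast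
    rw [div_pow, show (24 : ℂ) ^ k = 4 ^ k * 6 ^ k by rw [← mul_pow]; norm_num, pow_succ, pow_mul]
    norm_num
    ring

lemma hasSum_two_pow_mul_pred_div_cpow (hIe : ∀ k, I (2 * k) = 6 ^ k)
    (hIo : ∀ k, I (2 * k + 1) = 2 * 6 ^ k) (hr₁ : ‖4 / (6 : ℂ) ^ w‖ < 1)
    (hr₂ : ‖24 / (6 : ℂ) ^ w‖ < 1) (K : ℂ) :
    HasSum (fun n : ℕ => ((2 ^ n * (I (n + 1) - 1) : ℕ) : ℂ) * (K / (I (n + 2) : ℂ) ^ w))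
      ((-(K / 6 ^ w) + -(2 * K / (2 ^ w * 6 ^ w))) * (1 - 4 / 6 ^ w)⁻¹ +
        (2 * K / 6 ^ w + 12 * K / (2 ^ w * 6 ^ w)) * (1 - 24 / 6 ^ w)⁻¹) := by
  refine hasSum_of_even_odd_geometric₂ hr₁ hr₂ (fun k => ?_) (fun k => ?_)
  · rw [hIo, show 2 * k + 2 = 2 * (k + 1) by ring, hIe, natCast_pow_cpow,
      Nat.cast_mul, Nat.cast_sub (by have := Nat.one_le_pow k 6 (by norm_num); omega)]
    push_cast
    rw [div_pow, div_pow, show (24 : ℂ) ^ k = 4 ^ k * 6 ^ k by rw [← mul_pow]; norm_num, pow_mul]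
    norm_num
    ring
  · rw [show 2 * k + 1 + 1 = 2 * (k + 1) by ring, hIe,
      show 2 * k + 1 + 2 = 2 * (k + 1) + 1 by ring, hIo, natCast_two_mul_pow_cpow, Nat.cast_mul,
      Nat.cast_sub (Nat.one_le_pow _ _ (by norm_num))]
    push_cast
    rw [div_pow, div_pow, show (24 : ℂ) ^ k = 4 ^ k * 6 ^ k by rw [← mul_pow]; norm_num,
      pow_succ, pow_mul]
    norm_num
    ring

lemma tsum_two_pow_succ_mul_pred_div_cpow (hIe : ∀ k, I (2 * k) = 6 ^ k)
    (hIo : ∀ k, I (2 * k + 1) = 2 * 6 ^ k) (hr₁ : ‖4 / (6 : ℂ) ^ w‖ < 1)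
    (hr₂ : ‖24 / (6 : ℂ) ^ w‖ < 1) (K : ℂ) :
    ∑' n : ℕ, ((2 ^ (n + 1) * (I (n + 1) - 1) : ℕ) : ℂ) * (K / (I (n + 2) : ℂ) ^ w) =
      2 * ((-(K / 6 ^ w) + -(2 * K / (2 ^ w * 6 ^ w))) * (1 - 4 / 6 ^ w)⁻¹ +
        (2 * K / 6 ^ w + 12 * K / (2 ^ w * 6 ^ w)) * (1 - 24 / 6 ^ w)⁻¹) := by
  refine (((hasSum_two_pow_mul_pred_div_cpow hIe hIo hr₁ hr₂ K).mul_left 2).congr_fun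
    fun n => ?_).tsum_eq
  push_cast
  ring

end ScaleSums

/-- For `Re s > 1`, the spectral zeta function of the Laakso space with alternating sequence
`j = {2,3,2,3,...}` (so `I_{2k} = 6^k`, `I_{2k+1} = 2·6^k`) equals
`(ζ(2s)/π^(2s)) · [((2^{2s}+4)/12 + (2^{2s−1}+1)/2^{2s})·24/(6^{2s}−24)
+ (3·2^{2s}−6 + (6·2^{2s}−12)/2^{2s})/(6^{2s}−4) + (2^{2s+1}−2)/2^{2s} + 1]`. -/
theorem laakso_spectral_zeta_2323
    (j : ℕ → ℕ)
    (hodd : ∀ n, Odd n → j n = 2)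
    (heven : ∀ n, 1 ≤ n → Even n → j n = 3)
    (I : ℕ → ℕ) (hI : ∀ n, I n = ∏ i ∈ Finset.Icc 1 n, j i)
    (s : ℂ) (hs : 1 < s.re) :
    (∑' k : ℕ, ((((k : ℝ) + 1) ^ 2 * π ^ 2 : ℝ) : ℂ) ^ (-s)) +
    (∑' n : ℕ, (2 : ℂ) ^ (n + 1) *
      ∑' k : ℕ, ((((k : ℝ) + 1 / 2) ^ 2 * π ^ 2 * (I (n + 1) : ℝ) ^ 2 : ℝ) : ℂ) ^ (-s)) +
    (∑' n : ℕ, ((2 ^ n * (j (n + 1) - 2) * I n : ℕ) : ℂ) *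
      ∑' k : ℕ, ((((k : ℝ) + 1) ^ 2 * π ^ 2 * (I (n + 1) : ℝ) ^ 2 : ℝ) : ℂ) ^ (-s)) +
    (∑' n : ℕ, ((2 ^ (n + 1) * (I (n + 1) - 1) : ℕ) : ℂ) *
      ∑' k : ℕ, ((((k : ℝ) + 1) ^ 2 * π ^ 2 * (I (n + 2) : ℝ) ^ 2 : ℝ) : ℂ) ^ (-s)) +
    (∑' n : ℕ, ((2 ^ n * (I (n + 1) - 1) : ℕ) : ℂ) *
      ∑' k : ℕ, ((((k : ℝ) + 1) ^ 2 * π ^ 2 * (I (n + 2) : ℝ) ^ 2 / 4 : ℝ) : ℂ) ^ (-s)) =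
    (riemannZeta (2 * s) / (π : ℂ) ^ (2 * s)) *
      ((((2 : ℂ) ^ (2 * s) + 4) / 12 + ((2 : ℂ) ^ (2 * s - 1) + 1) / (2 : ℂ) ^ (2 * s)) *
          (24 / ((6 : ℂ) ^ (2 * s) - 24)) +
        (3 * (2 : ℂ) ^ (2 * s) - 6 + (6 * (2 : ℂ) ^ (2 * s) - 12) / (2 : ℂ) ^ (2 * s)) /
          ((6 : ℂ) ^ (2 * s) - 4) +
        ((2 : ℂ) ^ (2 * s + 1) - 2) / (2 : ℂ) ^ (2 * s) + 1) := by
  have hIe k : I (2 * k) = 6 ^ k := (hI _).trans (prod_Icc_two_mul_eq_six_pow hodd heven k)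
  have hIo k : I (2 * k + 1) = 2 * 6 ^ k :=
    (hI _).trans (prod_Icc_two_mul_add_one_eq_two_mul_six_pow hodd heven k)
  have hr₁ := norm_div_six_cpow_lt_one hs (c := 4) (by norm_num)
  have hr₂ := norm_div_six_cpow_lt_one hs (c := 24) (by norm_num)
  have hζ := tsum_succ_sq_mul_pi_sq_mul_sq_cpow_neg zero_le_one hs
  simp only [one_pow, mul_one, Complex.ofReal_one, Complex.one_cpow, div_one] at hζ
  simp only [tsum_succ_sq_mul_pi_sq_mul_sq_cpow_neg, tsum_add_half_sq_mul_pi_sq_mul_sq_cpow_neg,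
    tsum_succ_sq_mul_pi_sq_mul_sq_div_four_cpow_neg, Nat.cast_nonneg, hs, Complex.ofReal_natCast]
  rw [hζ, tsum_two_pow_succ_mul_div_cpow hIe hIo hr₁,
    tsum_two_pow_mul_sub_two_mul_div_cpow hodd heven hIe hIo hr₂,
    tsum_two_pow_succ_mul_pred_div_cpow hIe hIo hr₁ hr₂,
    (hasSum_two_pow_mul_pred_div_cpow hIe hIo hr₁ hr₂ _).tsum_eq,
    Complex.cpow_sub _ _ two_ne_zero, Complex.cpow_add _ _ two_ne_zero, Complex.cpow_one]
  have hX : (2 : ℂ) ^ (2 * s) ≠ 0 := by simp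
  have hB : (6 : ℂ) ^ (2 * s) ≠ 0 := by simp
  have hB₁ := sub_ne_zero_of_norm_div_lt_one (by norm_num) hr₁
  have hB₂ := sub_ne_zero_of_norm_div_lt_one (by norm_num) hr₂
  field_simp
  ring
end

section
/- Let j n = 2 for all n ≥ 1, so that I n = 2^n, and for t > 0 define Z(t) = Σ_{k≥0} e^{−k²π²t} + Σ_{n≥1} 2^n Σ_{k≥0} e^{−(k+1/2)²π²·4^n·t} + Σ_{n≥2} 2^{n−1}(2^{n−1} − 1) Σ_{k≥1} e^{−k²π²·4^n·t} + Σ_{n≥2} 2^{n−2}(2^{n−1} − 1) Σ_{k≥1} e^{−k²π²·4^n·t/4}. Then there exist constants c, C > 0 such that c/t ≤ Z(t) ≤ C/t for all t ∈ (0, 1]. In particular the spectral dimension of the j = 2 Laakso space equals 2. -/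
/-!
Write θ(y) = ∑_{k ≥ 1} e^{-k² y}. The three multi-level families are sums `∑ₙ wₙ θ(b 4ⁿ)` with
weights `wₙ ≤ C 4ⁿ` (for the half-integer family after `(k + 1/2)² ≥ (k + 1)²/4`). Since
`θ(2u²) ≤ e^{-u²} θ(u²) ≤ e^{1-u²}/(2u)`, with `b = 2s²` the `n`-th term is at most
`(e / 2s²) · g(s 2ⁿ)` where `g(u) = u e^{-u²}`, and `g(u) ≤ 4 (e^{-u/2} - e^{-u})` telescopes along
`u = s 2ⁿ`. Hence each family is `O(1/(π² t))`, and so is the single-level sum `1 + θ(π² t)`.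

For the lower bound keep only the level `n` with `4ⁿ ≤ 1/t < 4ⁿ⁺¹` of the integer family: it has at
least `2 · 4ⁿ > 1/(2t)` eigenvalues `≤ 16 π²/t`, so it contributes at least `e^{-16π²}/(2t)`.
-/

open Real Finset

lemma mul_exp_neg_sq_le {s : ℝ} (hs : 0 ≤ s) :
    s * exp (-s ^ 2) ≤ 4 * (exp (-(s / 2)) - exp (-s)) := by
  have hquarter : exp (1 / 4) ≤ 2 := by
    have := add_one_le_exp (-(1 / 4) : ℝ)
    rw [exp_neg] at this
    have hpos := exp_pos (1 / 4 : ℝ)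
    rw [le_inv_comm₀ (by norm_num) hpos] at this
    linarith
  have hsq : exp (-s ^ 2) ≤ 2 * exp (-s) :=
    calc exp (-s ^ 2) = exp (s - s ^ 2) * exp (-s) := by rw [← exp_add]; ring_nf
      _ ≤ 2 * exp (-s) := by
        gcongr
        exact (exp_le_exp.2 (by nlinarith [sq_nonneg (s - 1 / 2)])).trans hquarter
  calc s * exp (-s ^ 2) ≤ 4 * (s / 2) * exp (-s) := by nlinarith [exp_pos (-s)]
    _ ≤ 4 * (exp (s / 2) - 1) * exp (-s) := by gcongr; linarith [add_one_le_exp (s / 2)]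
    _ = 4 * (exp (-(s / 2)) - exp (-s)) := by
        rw [mul_assoc, sub_mul, ← exp_add, mul_sub]; ring_nf

lemma sum_range_two_pow_mul_exp_neg_sq_le {s : ℝ} (hs : 0 ≤ s) (N : ℕ) :
    ∑ n ∈ range N, s * 2 ^ n * exp (-(s * 2 ^ n) ^ 2) ≤ 4 := by
  set v : ℕ → ℝ := fun n => exp (-(s * 2 ^ n / 2))
  have hstep (n : ℕ) : s * 2 ^ n * exp (-(s * 2 ^ n) ^ 2) ≤ 4 * (v n - v (n + 1)) := by
    have hv : v (n + 1) = exp (-(s * 2 ^ n)) := by simp only [v]; ring_nf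
    rw [hv]
    exact mul_exp_neg_sq_le (by positivity)
  calc ∑ n ∈ range N, s * 2 ^ n * exp (-(s * 2 ^ n) ^ 2)
      ≤ ∑ n ∈ range N, 4 * (v n - v (n + 1)) := sum_le_sum fun n _ => hstep n
    _ = 4 * (v 0 - v N) := by rw [← mul_sum, sum_range_sub']
    _ ≤ 4 := by
        have h0 : v 0 ≤ 1 := exp_le_one_iff.2 (by simp only [pow_zero]; linarith)
        linarith [exp_pos (-(s * 2 ^ N / 2))]

noncomputable def thetaTail (y : ℝ) : ℝ := ∑' k : ℕ, exp (-(((k : ℝ) + 1) ^ 2 * y))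

lemma summable_exp_neg_succ_sq_mul {y : ℝ} (hy : 0 < y) :
    Summable fun k : ℕ => exp (-(((k : ℝ) + 1) ^ 2 * y)) := by
  refine (summable_exp_nat_mul_of_ge (neg_lt_zero.2 hy) (f := fun k : ℕ => ((k : ℝ) + 1) ^ 2)
    fun k => ?_).congr fun k => by ring_nf
  nlinarith [(k.cast_nonneg : (0 : ℝ) ≤ k)]

lemma summable_exp_neg_succ_mul {x : ℝ} (hx : 0 < x) :
    Summable fun k : ℕ => exp (-(((k : ℝ) + 1) * x)) :=
  (summable_exp_nat_mul_of_ge (neg_lt_zero.2 hx) (f := fun k : ℕ => (k : ℝ) + 1)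
    fun k => by linarith).congr fun k => by ring_nf

lemma tsum_exp_neg_succ_mul_le {x : ℝ} (hx : 0 < x) :
    ∑' k : ℕ, exp (-(((k : ℝ) + 1) * x)) ≤ 1 / x := by
  have hr : exp (-x) < 1 := exp_lt_one_iff.2 (by linarith)
  have hgeom : ∑' k : ℕ, exp (-(((k : ℝ) + 1) * x)) = exp (-x) * (1 - exp (-x))⁻¹ := by
    rw [← tsum_geometric_of_lt_one (exp_pos _).le hr, ← tsum_mul_left]
    exact tsum_congr fun k => by rw [← exp_nat_mul, ← exp_add]; ring_nf
  have hinv : exp (-x) * exp x = 1 := by rw [← exp_add]; simp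
  rw [hgeom, ← div_eq_mul_inv, div_le_div_iff₀ (by linarith) hx]
  nlinarith [add_one_le_exp x, exp_pos (-x)]

lemma thetaTail_sq_le {u : ℝ} (hu : 0 < u) : thetaTail (u ^ 2) ≤ exp 1 / (2 * u) := by
  have hx : 0 < 2 * u := by positivity
  calc thetaTail (u ^ 2) ≤ ∑' k : ℕ, exp 1 * exp (-(((k : ℝ) + 1) * (2 * u))) := by
        refine (summable_exp_neg_succ_sq_mul (by positivity)).tsum_le_tsum (fun k => ?_)
          ((summable_exp_neg_succ_mul hx).mul_left _)
        rw [← exp_add]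
        exact exp_le_exp.2 (by nlinarith [sq_nonneg (((k : ℝ) + 1) * u - 1)])
    _ ≤ exp 1 / (2 * u) := by
        rw [tsum_mul_left, div_eq_mul_one_div]
        exact mul_le_mul_of_nonneg_left (tsum_exp_neg_succ_mul_le hx) (exp_pos _).le

lemma thetaTail_two_mul_le {y : ℝ} (hy : 0 < y) : thetaTail (2 * y) ≤ exp (-y) * thetaTail y := by
  rw [thetaTail, thetaTail, ← tsum_mul_left]
  refine (summable_exp_neg_succ_sq_mul (by positivity)).tsum_le_tsum (fun k => ?_)
    ((summable_exp_neg_succ_sq_mul hy).mul_left _)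
  rw [← exp_add]
  have hk : (1 : ℝ) ≤ ((k : ℝ) + 1) ^ 2 := by nlinarith [(k.cast_nonneg : (0 : ℝ) ≤ k)]
  exact exp_le_exp.2 (by nlinarith)

lemma exp_neg_le_thetaTail {y : ℝ} (hy : 0 < y) : exp (-y) ≤ thetaTail y := by
  simpa [thetaTail] using (summable_exp_neg_succ_sq_mul hy).le_tsum 0 fun k _ => (exp_pos _).le

lemma sum_range_four_pow_mul_thetaTail_le {b : ℝ} (hb : 0 < b) (N : ℕ) :
    ∑ n ∈ range N, 4 ^ n * thetaTail (b * 4 ^ n) ≤ 4 * exp 1 / b := by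
  set s := √(b / 2)
  have hs : 0 < s := sqrt_pos.2 (by positivity)
  have hs2 : s ^ 2 = b / 2 := sq_sqrt (by positivity)
  have hterm (n : ℕ) : 4 ^ n * thetaTail (b * 4 ^ n)
      ≤ exp 1 / (2 * s ^ 2) * (s * 2 ^ n * exp (-(s * 2 ^ n) ^ 2)) := by
    have hu : 0 < s * 2 ^ n := by positivity
    have hb4 : b * 4 ^ n = 2 * (s * 2 ^ n) ^ 2 := by
      rw [mul_pow, hs2, ← pow_mul, pow_mul']; norm_num; ring
    calc 4 ^ n * thetaTail (b * 4 ^ n)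
        ≤ 4 ^ n * (exp (-(s * 2 ^ n) ^ 2) * (exp 1 / (2 * (s * 2 ^ n)))) := by
          rw [hb4]
          gcongr
          exact (thetaTail_two_mul_le (by positivity)).trans
            (mul_le_mul_of_nonneg_left (thetaTail_sq_le hu) (exp_pos _).le)
      _ = exp 1 / (2 * s ^ 2) * (s * 2 ^ n * exp (-(s * 2 ^ n) ^ 2)) := by
          have h4 : (4 : ℝ) ^ n = 2 ^ n * 2 ^ n := by rw [← mul_pow]; norm_num
          field_simp
          rw [h4]; ring
  calc ∑ n ∈ range N, 4 ^ n * thetaTail (b * 4 ^ n)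
      ≤ ∑ n ∈ range N, exp 1 / (2 * s ^ 2) * (s * 2 ^ n * exp (-(s * 2 ^ n) ^ 2)) :=
        sum_le_sum fun n _ => hterm n
    _ ≤ exp 1 / (2 * s ^ 2) * 4 := by
        rw [← mul_sum]
        gcongr
        exact sum_range_two_pow_mul_exp_neg_sq_le hs.le N
    _ = 4 * exp 1 / b := by rw [hs2]; field_simp

lemma thetaTail_nonneg (y : ℝ) : 0 ≤ thetaTail y := tsum_nonneg fun _ => (exp_pos _).le

lemma thetaTail_le {b : ℝ} (hb : 0 < b) : thetaTail b ≤ 4 * exp 1 / b := by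
  simpa using sum_range_four_pow_mul_thetaTail_le hb 1

lemma summable_four_pow_mul_thetaTail {b : ℝ} (hb : 0 < b) :
    Summable fun n : ℕ => 4 ^ n * thetaTail (b * 4 ^ n) :=
  summable_of_sum_range_le (fun n => mul_nonneg (by positivity) (thetaTail_nonneg _))
    (sum_range_four_pow_mul_thetaTail_le hb)

lemma tsum_four_pow_mul_thetaTail_le {b : ℝ} (hb : 0 < b) :
    ∑' n : ℕ, 4 ^ n * thetaTail (b * 4 ^ n) ≤ 4 * exp 1 / b :=
  tsum_le_of_sum_range_le (fun n => mul_nonneg (by positivity) (thetaTail_nonneg _))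
    (sum_range_four_pow_mul_thetaTail_le hb)

lemma two_pow_succ_mul_sub_one_le (n : ℕ) : 2 ^ (n + 1) * (2 ^ (n + 1) - 1) ≤ 4 * 4 ^ n := by
  have h4 : 4 ^ n = 2 ^ n * 2 ^ n := by rw [← mul_pow]; rfl
  have hm : 1 ≤ 2 ^ n := Nat.one_le_two_pow
  rw [h4, pow_succ]
  zify [show 1 ≤ 2 ^ n * 2 by omega]
  nlinarith

lemma two_mul_four_pow_le (n : ℕ) : 2 * 4 ^ n ≤ 2 ^ (n + 1) * (2 ^ (n + 1) - 1) := by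
  have h4 : 4 ^ n = 2 ^ n * 2 ^ n := by rw [← mul_pow]; rfl
  have hm : 1 ≤ 2 ^ n := Nat.one_le_two_pow
  rw [h4, pow_succ]
  zify [show 1 ≤ 2 ^ n * 2 by omega]
  nlinarith

lemma two_pow_mul_sub_one_le (n : ℕ) : 2 ^ n * (2 ^ (n + 1) - 1) ≤ 2 * 4 ^ n := by
  have h4 : 4 ^ n = 2 ^ n * 2 ^ n := by rw [← mul_pow]; rfl
  have hm : 1 ≤ 2 ^ n := Nat.one_le_two_pow
  rw [h4, pow_succ]
  zify [show 1 ≤ 2 ^ n * 2 by omega]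
  nlinarith

lemma tsum_le_thetaTail {f : ℕ → ℝ} {y : ℝ} (hy : 0 < y) (hf0 : ∀ k, 0 ≤ f k)
    (hf : ∀ k, f k ≤ exp (-(((k : ℝ) + 1) ^ 2 * y))) : ∑' k, f k ≤ thetaTail y :=
  ((summable_exp_neg_succ_sq_mul hy).of_nonneg_of_le hf0 hf).tsum_le_tsum hf
    (summable_exp_neg_succ_sq_mul hy)

section WeightedThetaTail

variable {w g : ℕ → ℝ} {b C : ℝ}

lemma mul_le_mul_four_pow_mul_thetaTail (hw0 : ∀ n, 0 ≤ w n) (hw : ∀ n, w n ≤ C * 4 ^ n)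
    (hg0 : ∀ n, 0 ≤ g n) (hg : ∀ n, g n ≤ thetaTail (b * 4 ^ n)) (n : ℕ) :
    w n * g n ≤ C * (4 ^ n * thetaTail (b * 4 ^ n)) :=
  (mul_le_mul (hw n) (hg n) (hg0 n) ((hw0 n).trans (hw n))).trans_eq (mul_assoc _ _ _)

lemma summable_mul_of_le_thetaTail (hb : 0 < b) (hw0 : ∀ n, 0 ≤ w n)
    (hw : ∀ n, w n ≤ C * 4 ^ n) (hg0 : ∀ n, 0 ≤ g n) (hg : ∀ n, g n ≤ thetaTail (b * 4 ^ n)) :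
    Summable fun n => w n * g n :=
  ((summable_four_pow_mul_thetaTail hb).mul_left C).of_nonneg_of_le
    (fun n => mul_nonneg (hw0 n) (hg0 n)) (mul_le_mul_four_pow_mul_thetaTail hw0 hw hg0 hg)

lemma tsum_mul_le_of_le_thetaTail (hb : 0 < b) (hw0 : ∀ n, 0 ≤ w n)
    (hw : ∀ n, w n ≤ C * 4 ^ n) (hg0 : ∀ n, 0 ≤ g n) (hg : ∀ n, g n ≤ thetaTail (b * 4 ^ n)) :
    ∑' n, w n * g n ≤ C * (4 * exp 1 / b) := by
  have hC : 0 ≤ C := by simpa using (hw0 0).trans (hw 0)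
  calc ∑' n, w n * g n ≤ ∑' n, C * (4 ^ n * thetaTail (b * 4 ^ n)) :=
        (summable_mul_of_le_thetaTail hb hw0 hw hg0 hg).tsum_le_tsum
          (mul_le_mul_four_pow_mul_thetaTail hw0 hw hg0 hg)
          ((summable_four_pow_mul_thetaTail hb).mul_left C)
    _ ≤ C * (4 * exp 1 / b) := by
        rw [tsum_mul_left]
        exact mul_le_mul_of_nonneg_left (tsum_four_pow_mul_thetaTail_le hb) hC

end WeightedThetaTail

section HeatTraceSeries

variable {a t : ℝ}

lemma tsum_exp_neg_nat_sq_le (ha : 0 < a) (ht : 0 < t) :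
    ∑' k : ℕ, exp (-((k : ℝ) ^ 2 * a) * t) ≤ 1 + 4 * exp 1 / (a * t) := by
  have hat : 0 < a * t := by positivity
  set f : ℕ → ℝ := fun k => exp (-((k : ℝ) ^ 2 * a) * t) with hf
  have hterm (k : ℕ) : f (k + 1) = exp (-(((k : ℝ) + 1) ^ 2 * (a * t))) := by
    simp only [hf]; push_cast; ring_nf
  have hshift : Summable fun k => f (k + 1) :=
    (summable_exp_neg_succ_sq_mul hat).congr fun k => (hterm k).symm
  have htail : ∑' k, f (k + 1) ≤ thetaTail (a * t) :=
    tsum_le_thetaTail hat (fun _ => (exp_pos _).le) fun k => (hterm k).le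
  rw [((summable_nat_add_iff 1).1 hshift).tsum_eq_zero_add]
  have h0 : f 0 = 1 := by simp [hf]
  linarith [thetaTail_le hat]

lemma tsum_half_int_family_le (ha : 0 < a) (ht : 0 < t) :
    ∑' n : ℕ, (2 : ℝ) ^ (n + 1) *
        ∑' k : ℕ, exp (-(((k : ℝ) + 1 / 2) ^ 2 * a * (4 : ℝ) ^ (n + 1)) * t)
      ≤ 8 * exp 1 / (a * t) := by
  have hat : 0 < a * t := by positivity
  have hw (n : ℕ) : (2 : ℝ) ^ (n + 1) ≤ 2 * 4 ^ n := by
    rw [pow_succ']; gcongr; norm_num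
  have hg (n k : ℕ) : exp (-(((k : ℝ) + 1 / 2) ^ 2 * a * (4 : ℝ) ^ (n + 1)) * t)
      ≤ exp (-(((k : ℝ) + 1) ^ 2 * (a * t * 4 ^ n))) := by
    have hk : ((k : ℝ) + 1) ^ 2 ≤ 4 * ((k : ℝ) + 1 / 2) ^ 2 := by
      nlinarith [(k.cast_nonneg : (0 : ℝ) ≤ k)]
    have := mul_le_mul_of_nonneg_right hk (by positivity : 0 ≤ a * t * 4 ^ n)
    exact exp_le_exp.2 (by rw [pow_succ (4 : ℝ) n]; linarith)
  refine (tsum_mul_le_of_le_thetaTail hat (fun n => by positivity) hw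
    (fun n => tsum_nonneg fun _ => (exp_pos _).le)
    fun n => tsum_le_thetaTail (by positivity) (fun _ => (exp_pos _).le) (hg n)).trans_eq ?_
  ring

lemma tsum_int_family_le (ha : 0 < a) (ht : 0 < t) :
    ∑' n : ℕ, ((2 ^ (n + 1) * (2 ^ (n + 1) - 1) : ℕ) : ℝ) *
        ∑' k : ℕ, exp (-(((k : ℝ) + 1) ^ 2 * a * (4 : ℝ) ^ (n + 2)) * t)
      ≤ exp 1 / (a * t) := by
  have hb : 0 < 16 * a * t := by positivity
  refine (tsum_mul_le_of_le_thetaTail hb (fun n => Nat.cast_nonneg _) (C := 4)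
    (fun n => by exact_mod_cast two_pow_succ_mul_sub_one_le n)
    (fun n => tsum_nonneg fun _ => (exp_pos _).le)
    fun n => tsum_le_thetaTail (by positivity) (fun _ => (exp_pos _).le)
      fun k => le_of_eq (by ring_nf)).trans_eq ?_
  field_simp; ring

lemma tsum_int_quarter_family_le (ha : 0 < a) (ht : 0 < t) :
    ∑' n : ℕ, ((2 ^ n * (2 ^ (n + 1) - 1) : ℕ) : ℝ) *
        ∑' k : ℕ, exp (-(((k : ℝ) + 1) ^ 2 * a * (4 : ℝ) ^ (n + 2) / 4) * t)
      ≤ 2 * exp 1 / (a * t) := by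
  have hb : 0 < 4 * a * t := by positivity
  refine (tsum_mul_le_of_le_thetaTail hb (fun n => Nat.cast_nonneg _) (C := 2)
    (fun n => by exact_mod_cast two_pow_mul_sub_one_le n)
    (fun n => tsum_nonneg fun _ => (exp_pos _).le)
    fun n => tsum_le_thetaTail (by positivity) (fun _ => (exp_pos _).le)
      fun k => le_of_eq (by ring_nf)).trans_eq ?_
  field_simp

lemma le_tsum_int_family (ha : 0 < a) (ht : t ∈ Set.Ioc (0 : ℝ) 1) :
    exp (-(16 * a)) / (2 * t) ≤ ∑' n : ℕ, ((2 ^ (n + 1) * (2 ^ (n + 1) - 1) : ℕ) : ℝ) *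
        ∑' k : ℕ, exp (-(((k : ℝ) + 1) ^ 2 * a * (4 : ℝ) ^ (n + 2)) * t) := by
  obtain ⟨ht0, ht1⟩ := ht
  have hb : 0 < 16 * a * t := by positivity
  have hinner (n : ℕ) : ∑' k : ℕ, exp (-(((k : ℝ) + 1) ^ 2 * a * (4 : ℝ) ^ (n + 2)) * t)
      = thetaTail (16 * a * t * 4 ^ n) := tsum_congr fun k => by ring_nf
  simp_rw [hinner]
  have hsum : Summable fun n : ℕ =>
      ((2 ^ (n + 1) * (2 ^ (n + 1) - 1) : ℕ) : ℝ) * thetaTail (16 * a * t * 4 ^ n) :=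
    summable_mul_of_le_thetaTail hb (fun n => Nat.cast_nonneg _) (C := 4)
      (fun n => by exact_mod_cast two_pow_succ_mul_sub_one_le n) (fun n => thetaTail_nonneg _)
      fun n => le_rfl
  obtain ⟨n, hn, hn'⟩ := exists_nat_pow_near (one_le_one_div ht0 ht1) (by norm_num : (1 : ℝ) < 4)
  have hw : (2 : ℝ) * 4 ^ n ≤ ((2 ^ (n + 1) * (2 ^ (n + 1) - 1) : ℕ) : ℝ) := by
    exact_mod_cast two_mul_four_pow_le n
  have ht4 : t * 4 ^ n ≤ 1 := by rwa [le_div_iff₀ ht0, mul_comm] at hn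
  have h4t : 1 / (2 * t) ≤ 2 * 4 ^ n := by
    rw [div_lt_iff₀ ht0, pow_succ] at hn'
    rw [div_le_iff₀ (by positivity)]
    linarith
  calc exp (-(16 * a)) / (2 * t) = 1 / (2 * t) * exp (-(16 * a)) := by ring
    _ ≤ 2 * 4 ^ n * exp (-(16 * a * t * 4 ^ n)) := by
        refine mul_le_mul h4t (exp_le_exp.2 ?_) (exp_pos _).le (by positivity)
        nlinarith [mul_le_mul_of_nonneg_left ht4 (by positivity : (0 : ℝ) ≤ 16 * a)]
    _ ≤ ((2 ^ (n + 1) * (2 ^ (n + 1) - 1) : ℕ) : ℝ) * thetaTail (16 * a * t * 4 ^ n) :=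
        mul_le_mul hw (exp_neg_le_thetaTail (by positivity)) (exp_pos _).le (Nat.cast_nonneg _)
    _ ≤ _ := hsum.le_tsum n fun m _ => mul_nonneg (Nat.cast_nonneg _) (thetaTail_nonneg _)

end HeatTraceSeries

/-- The heat-kernel trace of the `j = 2` Laakso space satisfies `Z(t) ≍ 1/t` for
`t ∈ (0, 1]`; in particular its spectral dimension equals `2`. -/
theorem laakso_heat_trace_j2
    (Z : ℝ → ℝ)
    (hZ : ∀ t : ℝ, Z t =
      (∑' k : ℕ, Real.exp (-((k : ℝ) ^ 2 * π ^ 2) * t)) +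
      (∑' n : ℕ, (2 : ℝ) ^ (n + 1) *
        ∑' k : ℕ, Real.exp (-(((k : ℝ) + 1 / 2) ^ 2 * π ^ 2 * (4 : ℝ) ^ (n + 1)) * t)) +
      (∑' n : ℕ, ((2 ^ (n + 1) * (2 ^ (n + 1) - 1) : ℕ) : ℝ) *
        ∑' k : ℕ, Real.exp (-(((k : ℝ) + 1) ^ 2 * π ^ 2 * (4 : ℝ) ^ (n + 2)) * t)) +
      (∑' n : ℕ, ((2 ^ n * (2 ^ (n + 1) - 1) : ℕ) : ℝ) *
        ∑' k : ℕ, Real.exp (-(((k : ℝ) + 1) ^ 2 * π ^ 2 * (4 : ℝ) ^ (n + 2) / 4) * t))) :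
    ∃ c C : ℝ, 0 < c ∧ 0 < C ∧
      ∀ t ∈ Set.Ioc (0 : ℝ) 1, c / t ≤ Z t ∧ Z t ≤ C / t := by
  have hπ : 0 < π ^ 2 := by positivity
  refine ⟨exp (-(16 * π ^ 2)) / 2, 1 + 15 * exp 1 / π ^ 2, by positivity, by positivity,
    fun t ht => ?_⟩
  have ht0 : 0 < t := ht.1
  have hS1 := tsum_exp_neg_nat_sq_le hπ ht0
  have hS2 := tsum_half_int_family_le hπ ht0
  have hS3 := tsum_int_family_le hπ ht0
  have hS4 := tsum_int_quarter_family_le hπ ht0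
  have hS3' := le_tsum_int_family hπ ht
  have h1t : 1 ≤ 1 / t := one_le_one_div ht0 ht.2
  rw [hZ t]
  constructor
  · rw [div_div]
    exact hS3'.trans ((le_add_of_nonneg_left (by positivity)).trans
      (le_add_of_nonneg_right (by positivity)))
  · have hsum : 4 * exp 1 / (π ^ 2 * t) + 8 * exp 1 / (π ^ 2 * t) + exp 1 / (π ^ 2 * t)
        + 2 * exp 1 / (π ^ 2 * t) = 15 * exp 1 / π ^ 2 * (1 / t) := by ring
    have hC : (1 + 15 * exp 1 / π ^ 2) / t = 1 / t + 15 * exp 1 / π ^ 2 * (1 / t) := by ring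
    linarith
end

section
/- Let j : ℕ → ℕ (indexed from 1) be the alternating sequence with j n = 2 for odd n and j n = 3 for even n, set I n = ∏_{i=1}^n j i, and for t > 0 define Z(t) = Σ_{k≥0} e^{−k²π²t} + Σ_{n≥1} 2^n Σ_{k≥0} e^{−(k+1/2)²π²(I n)²t} + Σ_{n≥1} 2^{n−1}(j n − 2)·I(n−1) Σ_{k≥1} e^{−k²π²(I n)²t} + Σ_{n≥2} 2^{n−1}(I(n−1) − 1) Σ_{k≥1} e^{−k²π²(I n)²t} + Σ_{n≥2} 2^{n−2}(I(n−1) − 1) Σ_{k≥1} e^{−k²π²(I n)²t/4}. Then, with α = log(24)/(2·log 6), there exist constants c, C > 0 such that c·t^{−α} ≤ Z(t) ≤ C·t^{−α} for all t ∈ (0, 1]. In particular the spectral dimension of this Laakso space equals log(24)/log(6). -/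
/-!
Since `Iₙ² ≤ 6ⁿ ≤ 2 Iₙ²`, each of the four double sums in `Z` has eigenvalues `≥ (k + 1)² 6ⁿ` and
multiplicities `≤ 6 · 2ⁿ Iₙ ≤ 6 (6^α)ⁿ` (as `6^α = √24`), so it is at most
`6 Σₙ (6^α)ⁿ θ(6ⁿ t)` with `θ(s) = Σ_{k ≥ 1} e^{-k² s} ≤ K_β s^{-β}` for every `β ∈ (1/2, 1]`.
Using `β = 1` where `6ⁿ t ≥ 1` and some `β ∈ (1/2, α)` where `6ⁿ t ≤ 1` turns the sum over `n` into
two geometric series meeting at `6ⁿ t ≈ 1`, each `O(t^{-α})`. Conversely, for the largest `m` with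
`36^{m+1} t ≤ 1`, the `n = 2m` term of the fourth sum has lowest eigenvalue `π² 36^{m+1} ≤ π² / t`
and multiplicity `≥ 2 · 24^m`, so it alone contributes `≥ 2 · 24^m e^{-π²} ≳ t^{-α}`.
-/

open Real Finset

lemma one_le_pi_sq : 1 ≤ π ^ 2 := by nlinarith [pi_gt_three]

noncomputable def thetaSum (s : ℝ) : ℝ := ∑' k : ℕ, exp (-(((k : ℝ) + 1) ^ 2 * s))

lemma exp_neg_le_rpow_neg {x b : ℝ} (hx : 0 < x) (hb0 : 0 ≤ b) (hb1 : b ≤ 1) :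
    exp (-x) ≤ x ^ (-b) := by
  have hxb : x ^ b ≤ exp x := by
    rcases le_total x 1 with h | h
    · linarith [rpow_le_one hx.le h hb0, add_one_le_exp x]
    · linarith [rpow_le_self_of_one_le h hb1, add_one_le_exp x]
  rw [rpow_neg hx.le, exp_neg]
  exact inv_anti₀ (rpow_pos_of_pos hx b) hxb

lemma exp_neg_sq_mul_le_s16 {b s : ℝ} (hb0 : 0 ≤ b) (hb1 : b ≤ 1) (hs : 0 < s) (k : ℕ) :
    exp (-(((k : ℝ) + 1) ^ 2 * s)) ≤ ((k : ℝ) + 1) ^ (-(2 * b)) * s ^ (-b) := by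
  have hk : (0 : ℝ) < (k : ℝ) + 1 := by positivity
  calc exp (-(((k : ℝ) + 1) ^ 2 * s)) ≤ (((k : ℝ) + 1) ^ 2 * s) ^ (-b) :=
        exp_neg_le_rpow_neg (by positivity) hb0 hb1
    _ = ((k : ℝ) + 1) ^ (-(2 * b)) * s ^ (-b) := by
      rw [mul_rpow (by positivity) hs.le, ← rpow_natCast, ← rpow_mul hk.le]
      norm_num

lemma summable_add_one_rpow_neg {b : ℝ} (hb : 1 / 2 < b) :
    Summable fun k : ℕ => ((k : ℝ) + 1) ^ (-(2 * b)) := by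
  have := (summable_nat_add_iff 1).2 (summable_nat_rpow.2 (by linarith : -(2 * b) < -1))
  simpa using this

lemma summable_exp_neg_sq_mul {s : ℝ} (hs : 0 < s) :
    Summable fun k : ℕ => exp (-(((k : ℝ) + 1) ^ 2 * s)) :=
  ((summable_add_one_rpow_neg (b := 1) (by norm_num)).mul_right _).of_nonneg_of_le
    (fun _ => (exp_pos _).le) (exp_neg_sq_mul_le_s16 zero_le_one le_rfl hs)

lemma thetaSum_le {b s : ℝ} (hb : 1 / 2 < b) (hb1 : b ≤ 1) (hs : 0 < s) :
    thetaSum s ≤ (∑' k : ℕ, ((k : ℝ) + 1) ^ (-(2 * b))) * s ^ (-b) := by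
  rw [← tsum_mul_right]
  exact (summable_exp_neg_sq_mul hs).tsum_le_tsum
    (exp_neg_sq_mul_le_s16 (by linarith) hb1 hs) ((summable_add_one_rpow_neg hb).mul_right _)

section Comparison

variable {s t : ℝ} {x : ℕ → ℝ}

lemma exp_neg_mul_le_of_sq_mul_le (hx : ∀ k : ℕ, ((k : ℝ) + 1) ^ 2 * s ≤ x k * t) (k : ℕ) :
    exp (-x k * t) ≤ exp (-(((k : ℝ) + 1) ^ 2 * s)) := by
  rw [neg_mul]
  exact exp_le_exp.2 (neg_le_neg (hx k))

lemma summable_exp_neg_mul_of_sq_mul_le (hs : 0 < s)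
    (hx : ∀ k : ℕ, ((k : ℝ) + 1) ^ 2 * s ≤ x k * t) : Summable fun k => exp (-x k * t) :=
  (summable_exp_neg_sq_mul hs).of_nonneg_of_le (fun _ => (exp_pos _).le)
    (exp_neg_mul_le_of_sq_mul_le hx)

lemma tsum_exp_neg_mul_le_thetaSum (hs : 0 < s)
    (hx : ∀ k : ℕ, ((k : ℝ) + 1) ^ 2 * s ≤ x k * t) : ∑' k, exp (-x k * t) ≤ thetaSum s :=
  (summable_exp_neg_mul_of_sq_mul_le hs hx).tsum_le_tsum (exp_neg_mul_le_of_sq_mul_le hx)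
    (summable_exp_neg_sq_mul hs)

end Comparison

section GeometricMin

variable {r a b t : ℝ}

lemma pow_mul_rpow (hr : 0 ≤ r) (ht : 0 ≤ t) (a : ℝ) (m : ℕ) :
    (r ^ m * t) ^ a = (r ^ a) ^ m * t ^ a := by
  rw [mul_rpow (by positivity) ht, ← rpow_natCast r m, ← rpow_mul hr, mul_comm (m : ℝ),
    rpow_mul_natCast hr]

lemma rpow_le_pow_sub_of_pow_mul_le_one (hr : 0 < r) (ha : 0 ≤ a) (ht : 0 < t) {n N : ℕ}
    (hn : n ≤ N) (hN : r ^ N * t ≤ 1) : (r ^ n * t) ^ a ≤ (r ^ (-a)) ^ (N - n) := by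
  have h : (r ^ a) ^ (N - n) * (r ^ n * t) ^ a ≤ 1 := by
    rw [← pow_mul_rpow hr.le (by positivity : 0 ≤ r ^ n * t), ← mul_assoc, ← pow_add,
      Nat.sub_add_cancel hn]
    exact rpow_le_one (by positivity) hN ha
  rw [rpow_neg hr.le, inv_pow, ← one_div, le_div_iff₀' (by positivity)]
  exact h

lemma rpow_neg_le_pow_of_one_lt_pow_mul (hr : 0 < r) (hb : 0 ≤ b) {N : ℕ}
    (hN : 1 < r ^ N * t) (m : ℕ) : (r ^ (m + N) * t) ^ (-b) ≤ (r ^ (-b)) ^ m := by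
  rw [pow_add, mul_assoc, pow_mul_rpow hr.le (by positivity)]
  exact mul_le_of_le_one_right (by positivity) (rpow_le_one_of_one_le_of_nonpos hN.le (by linarith))

lemma summable_min_rpow_geometric (hr : 1 < r) (hb : 0 < b) (ht : 0 < t) :
    Summable fun n : ℕ => min ((r ^ n * t) ^ a) ((r ^ n * t) ^ (-b)) := by
  have hq : r ^ (-b) < 1 := rpow_lt_one_of_one_lt_of_neg hr (by linarith)
  refine Summable.of_nonneg_of_le (fun n => le_min (by positivity) (by positivity))
    (fun n => (min_le_right _ _).trans_eq (pow_mul_rpow (by positivity) ht.le _ n))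
    ((summable_geometric_of_lt_one (by positivity) hq).mul_right _)

lemma tsum_min_rpow_geometric_le (hr : 1 < r) (ha : 0 < a) (hb : 0 < b) (ht0 : 0 < t)
    (ht1 : t ≤ 1) :
    ∑' n : ℕ, min ((r ^ n * t) ^ a) ((r ^ n * t) ^ (-b)) ≤ (1 - r ^ (-a))⁻¹ + (1 - r ^ (-b))⁻¹ := by
  have hr0 : 0 < r := by linarith
  have hqa : r ^ (-a) < 1 := rpow_lt_one_of_one_lt_of_neg hr (by linarith)
  have hqb : r ^ (-b) < 1 := rpow_lt_one_of_one_lt_of_neg hr (by linarith)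
  obtain ⟨N, hN, hN1⟩ := exists_nat_pow_near (one_le_one_div ht0 ht1) hr
  rw [le_div_iff₀ ht0] at hN
  rw [div_lt_iff₀ ht0] at hN1
  have head : ∑ n ∈ range (N + 1), min ((r ^ n * t) ^ a) ((r ^ n * t) ^ (-b)) ≤
      (1 - r ^ (-a))⁻¹ :=
    calc _ ≤ ∑ n ∈ range (N + 1), (r ^ (-a)) ^ (N + 1 - 1 - n) :=
          sum_le_sum fun n hn => (min_le_left _ _).trans
            (rpow_le_pow_sub_of_pow_mul_le_one hr0 ha.le ht0 (by simp at hn; omega) hN)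
      _ = ∑ m ∈ range (N + 1), (r ^ (-a)) ^ m := sum_range_reflect _ _
      _ ≤ _ := by
        rw [← tsum_geometric_of_lt_one (by positivity) hqa]
        exact Summable.sum_le_tsum _ (fun _ _ => by positivity)
          (summable_geometric_of_lt_one (by positivity) hqa)
  have tail : ∑' m : ℕ, min ((r ^ (m + (N + 1)) * t) ^ a) ((r ^ (m + (N + 1)) * t) ^ (-b)) ≤
      (1 - r ^ (-b))⁻¹ := by
    rw [← tsum_geometric_of_lt_one (by positivity) hqb]
    exact ((summable_nat_add_iff (N + 1)).2 (summable_min_rpow_geometric hr hb ht0)).tsum_le_tsum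
      (fun m => (min_le_right _ _).trans
        (rpow_neg_le_pow_of_one_lt_pow_mul hr0 hb.le hN1 m))
      (summable_geometric_of_lt_one (by positivity) hqb)
  rw [← (summable_min_rpow_geometric hr hb ht0).sum_add_tsum_nat_add (N + 1)]
  exact add_le_add head tail

end GeometricMin

section WeightedTheta

variable {r s : ℝ}

noncomputable def weightedHeatSum (M : ℕ → ℝ) (x : ℕ → ℕ → ℝ) (s : ℝ) : ℝ :=
  ∑' n, M n * ∑' k, exp (-x n k * s)

lemma weightedHeatSum_nonneg {M : ℕ → ℝ} (hM : ∀ n, 0 ≤ M n) (x : ℕ → ℕ → ℝ) (s : ℝ) :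
    0 ≤ weightedHeatSum M x s :=
  tsum_nonneg fun n => mul_nonneg (hM n) (tsum_nonneg fun _ => (exp_pos _).le)

lemma mul_exp_neg_le_weightedHeatSum {M : ℕ → ℝ} {x : ℕ → ℕ → ℝ} (hM : ∀ n, 0 ≤ M n)
    (hsum : Summable fun n => M n * ∑' k, exp (-x n k * s)) {n : ℕ}
    (hsumn : Summable fun k => exp (-x n k * s)) :
    M n * exp (-x n 0 * s) ≤ weightedHeatSum M x s :=
  calc M n * exp (-x n 0 * s) ≤ M n * ∑' k, exp (-x n k * s) :=
        mul_le_mul_of_nonneg_left (hsumn.le_tsum 0 fun _ _ => (exp_pos _).le) (hM n)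
    _ ≤ weightedHeatSum M x s :=
        hsum.le_tsum n fun m _ => mul_nonneg (hM m) (tsum_nonneg fun _ => (exp_pos _).le)

lemma pow_rpow_mul_rpow_neg (hr : 0 < r) (hs : 0 < s) (α b : ℝ) (n : ℕ) :
    (r ^ α) ^ n * (r ^ n * s) ^ (-b) = s ^ (-α) * (r ^ n * s) ^ (α - b) := by
  have hα : (r ^ n * s) ^ α = (r ^ α) ^ n * s ^ α := pow_mul_rpow hr.le hs.le α n
  rw [sub_eq_add_neg, rpow_add (by positivity), hα, rpow_neg hs.le]
  field_simp [(rpow_pos_of_pos hs α).ne']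

lemma pow_rpow_mul_thetaSum_le (hr : 0 < r) (hs : 0 < s) {b : ℝ} (hb : 1 / 2 < b) (hb1 : b ≤ 1)
    (α : ℝ) (n : ℕ) :
    (r ^ α) ^ n * thetaSum (r ^ n * s) ≤
      (∑' k : ℕ, ((k : ℝ) + 1) ^ (-(2 * b))) * s ^ (-α) * (r ^ n * s) ^ (α - b) := by
  calc (r ^ α) ^ n * thetaSum (r ^ n * s)
      ≤ (r ^ α) ^ n * ((∑' k : ℕ, ((k : ℝ) + 1) ^ (-(2 * b))) * (r ^ n * s) ^ (-b)) := by
        gcongr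
        exact thetaSum_le hb hb1 (by positivity)
    _ = _ := by rw [mul_left_comm, pow_rpow_mul_rpow_neg hr hs, mul_assoc]

lemma pow_rpow_mul_thetaSum_le_min (hr : 0 < r) (hs : 0 < s) {α β : ℝ} (hβ : 1 / 2 < β)
    (hβ1 : β ≤ 1) (n : ℕ) :
    (r ^ α) ^ n * thetaSum (r ^ n * s) ≤
      (∑' k : ℕ, ((k : ℝ) + 1) ^ (-(2 * β)) + ∑' k : ℕ, ((k : ℝ) + 1) ^ (-(2 * (1 : ℝ)))) *
        s ^ (-α) * min ((r ^ n * s) ^ (α - β)) ((r ^ n * s) ^ (-(1 - α))) := by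
  have hK : ∀ b : ℝ, 0 ≤ ∑' k : ℕ, ((k : ℝ) + 1) ^ (-(2 * b)) :=
    fun b => tsum_nonneg fun _ => by positivity
  have h₁ := pow_rpow_mul_thetaSum_le hr hs hβ hβ1 α n
  have h₂ := pow_rpow_mul_thetaSum_le hr hs (b := 1) (by norm_num) le_rfl α n
  rw [← neg_sub] at h₂
  rw [mul_min_of_nonneg _ _ (by positivity)]
  refine le_min (h₁.trans ?_) (h₂.trans ?_) <;> gcongr
  · linarith [hK 1]
  · linarith [hK β]

theorem exists_weightedHeatSum_le {α c : ℝ} (hr : 1 < r) (hα : 1 / 2 < α) (hα1 : α < 1)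
    (hc : 0 ≤ c) :
    ∃ C, 0 ≤ C ∧ ∀ s, 0 < s → s ≤ 1 → ∀ (M : ℕ → ℝ) (x : ℕ → ℕ → ℝ), (∀ n, 0 ≤ M n) →
      (∀ n, M n ≤ c * (r ^ α) ^ n) → (∀ n k : ℕ, ((k : ℝ) + 1) ^ 2 * r ^ n ≤ x n k) →
      Summable (fun n => M n * ∑' k, exp (-x n k * s)) ∧
        weightedHeatSum M x s ≤ C * s ^ (-α) := by
  obtain ⟨β, hβ, hβα⟩ := exists_between hα
  have hr0 : 0 < r := by linarith
  set K := ∑' k : ℕ, ((k : ℝ) + 1) ^ (-(2 * β)) + ∑' k : ℕ, ((k : ℝ) + 1) ^ (-(2 * (1 : ℝ)))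
  have hK : ∀ b : ℝ, 0 ≤ ∑' k : ℕ, ((k : ℝ) + 1) ^ (-(2 * b)) :=
    fun b => tsum_nonneg fun _ => by positivity
  have hG : ∀ a : ℝ, 0 < a → 0 ≤ (1 - r ^ (-a))⁻¹ := fun a ha =>
    inv_nonneg.2 (sub_nonneg.2 (rpow_le_one_of_one_le_of_nonpos hr.le (by linarith)))
  refine ⟨c * K * ((1 - r ^ (-(α - β)))⁻¹ + (1 - r ^ (-(1 - α)))⁻¹),
    mul_nonneg (mul_nonneg hc (add_nonneg (hK _) (hK _)))
      (add_nonneg (hG _ (by linarith)) (hG _ (by linarith))), ?_⟩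
  intro s hs hs1 M x hM0 hM hx
  set g := fun n : ℕ => min ((r ^ n * s) ^ (α - β)) ((r ^ n * s) ^ (-(1 - α)))
  have key : ∀ n, M n * ∑' k, exp (-x n k * s) ≤ c * K * s ^ (-α) * g n := by
    intro n
    have hθ : ∑' k, exp (-x n k * s) ≤ thetaSum (r ^ n * s) :=
      tsum_exp_neg_mul_le_thetaSum (by positivity) fun k => by
        rw [← mul_assoc]
        exact mul_le_mul_of_nonneg_right (hx n k) hs.le
    calc M n * ∑' k, exp (-x n k * s) ≤ c * (r ^ α) ^ n * thetaSum (r ^ n * s) :=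
          mul_le_mul (hM n) hθ (tsum_nonneg fun _ => (exp_pos _).le) (by positivity)
      _ ≤ c * (K * s ^ (-α) * g n) := by
        rw [mul_assoc]
        exact mul_le_mul_of_nonneg_left
          (pow_rpow_mul_thetaSum_le_min hr0 hs hβ (by linarith) n) hc
      _ = c * K * s ^ (-α) * g n := by ring
  have hg := summable_min_rpow_geometric (a := α - β) hr (by linarith : 0 < 1 - α) hs
  have hsum := hg.mul_left (c * K * s ^ (-α))
  have hMsum : Summable (fun n => M n * ∑' k, exp (-x n k * s)) :=
    hsum.of_nonneg_of_le (fun n => mul_nonneg (hM0 n) (tsum_nonneg fun _ => (exp_pos _).le)) key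
  refine ⟨hMsum, ?_⟩
  calc weightedHeatSum M x s ≤ ∑' n, c * K * s ^ (-α) * g n :=
        hMsum.tsum_le_tsum key hsum
    _ = c * K * s ^ (-α) * ∑' n, g n := tsum_mul_left
    _ ≤ c * K * s ^ (-α) * ((1 - r ^ (-(α - β)))⁻¹ + (1 - r ^ (-(1 - α)))⁻¹) := by
        gcongr
        exact tsum_min_rpow_geometric_le hr (by linarith) (by linarith) hs hs1
    _ = _ := by ring

end WeightedTheta

lemma tsum_exp_neg_sq_mul_eq {c t : ℝ} (hc : 1 ≤ c) (ht : 0 < t) :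
    ∑' k : ℕ, exp (-((k : ℝ) ^ 2 * c) * t) = 1 + ∑' k : ℕ, exp (-(((k : ℝ) + 1) ^ 2 * c) * t) := by
  have h : Summable fun k : ℕ => exp (-(((k : ℝ) + 1) ^ 2 * c) * t) :=
    summable_exp_neg_mul_of_sq_mul_le ht fun k =>
      mul_le_mul_of_nonneg_right (le_mul_of_one_le_right (sq_nonneg _) hc) ht.le
  rw [((summable_nat_add_iff 1).1 (by simpa using h)).tsum_eq_zero_add]
  simp

namespace Laakso

variable {j I : ℕ → ℕ}

lemma exponent_mem : 1 / 2 < log 24 / (2 * log 6) ∧ log 24 / (2 * log 6) < 1 := by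
  have h6 : 0 < log 6 := log_pos (by norm_num)
  have h24 : log 6 < log 24 := log_lt_log (by norm_num) (by norm_num)
  have h36 : log 24 < 2 * log 6 := by
    rw [← log_rpow (by norm_num)]
    exact log_lt_log (by norm_num) (by norm_num)
  constructor
  · rw [lt_div_iff₀ (by positivity)]
    linarith
  · rw [div_lt_one (by positivity)]
    exact h36

lemma six_rpow_exponent : (6 : ℝ) ^ (log 24 / (2 * log 6)) = √24 := by
  have h6 : log 6 ≠ 0 := (log_pos (by norm_num)).ne'
  rw [sqrt_eq_rpow, rpow_def_of_pos (by norm_num), rpow_def_of_pos (by norm_num)]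
  congr 1
  field_simp

lemma thirtySix_rpow_exponent : (36 : ℝ) ^ (log 24 / (2 * log 6)) = 24 := by
  rw [show (36 : ℝ) = 6 ^ 2 by norm_num, ← rpow_pow_comm (by norm_num), six_rpow_exponent,
    sq_sqrt (by norm_num)]

lemma I_succ (hI : ∀ n, I n = ∏ i ∈ Finset.Icc 1 n, j i) (n : ℕ) :
    I (n + 1) = I n * j (n + 1) := by
  rw [hI, hI, prod_Icc_succ_top (by omega)]

lemma I_two_mul (hodd : ∀ n, Odd n → j n = 2) (heven : ∀ n, 1 ≤ n → Even n → j n = 3)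
    (hI : ∀ n, I n = ∏ i ∈ Finset.Icc 1 n, j i) (m : ℕ) :
    I (2 * m) = 6 ^ m ∧ I (2 * m + 1) = 2 * 6 ^ m := by
  have hodd' : ∀ m, I (2 * m + 1) = 2 * I (2 * m) := fun m => by
    rw [I_succ hI, hodd _ (odd_two_mul_add_one m), mul_comm]
  induction m with
  | zero => simp [hI, hodd 1 odd_one]
  | succ m ih =>
    have h : I (2 * (m + 1)) = 6 ^ (m + 1) := by
      rw [show 2 * (m + 1) = 2 * m + 1 + 1 by ring, I_succ hI, ih.2,
        heven _ (by omega) ⟨m + 1, by ring⟩]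
      ring
    exact ⟨h, by rw [hodd', h]⟩

lemma I_sq_le_and_six_pow_le (hodd : ∀ n, Odd n → j n = 2)
    (heven : ∀ n, 1 ≤ n → Even n → j n = 3) (hI : ∀ n, I n = ∏ i ∈ Finset.Icc 1 n, j i) (n : ℕ) :
    I n ^ 2 ≤ 6 ^ n ∧ 6 ^ n ≤ 2 * I n ^ 2 := by
  obtain ⟨m, rfl | rfl⟩ := Nat.even_or_odd' n
  · rw [(I_two_mul hodd heven hI m).1, pow_mul']
    omega
  · rw [(I_two_mul hodd heven hI m).2, pow_succ 6 (2 * m), pow_mul']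
    constructor <;> nlinarith [sq_nonneg (6 ^ m)]

lemma j_succ_le_three (hodd : ∀ n, Odd n → j n = 2) (heven : ∀ n, 1 ≤ n → Even n → j n = 3)
    (n : ℕ) : j (n + 1) ≤ 3 := by
  rcases Nat.even_or_odd (n + 1) with h | h
  · rw [heven _ (by omega) h]
  · rw [hodd _ h]; omega

lemma I_succ_le (hodd : ∀ n, Odd n → j n = 2) (heven : ∀ n, 1 ≤ n → Even n → j n = 3)
    (hI : ∀ n, I n = ∏ i ∈ Finset.Icc 1 n, j i) (n : ℕ) : I (n + 1) ≤ 3 * I n := by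
  rw [I_succ hI, mul_comm]
  exact Nat.mul_le_mul_right _ (j_succ_le_three hodd heven n)

lemma I_pos (hodd : ∀ n, Odd n → j n = 2) (heven : ∀ n, 1 ≤ n → Even n → j n = 3)
    (hI : ∀ n, I n = ∏ i ∈ Finset.Icc 1 n, j i) (n : ℕ) : 0 < I n := by
  have h := (I_sq_le_and_six_pow_le hodd heven hI n).2
  refine Nat.pos_of_ne_zero fun h0 => ?_
  simp [h0] at h

lemma two_pow_mul_I_le_sqrt_pow (hodd : ∀ n, Odd n → j n = 2)
    (heven : ∀ n, 1 ≤ n → Even n → j n = 3) (hI : ∀ n, I n = ∏ i ∈ Finset.Icc 1 n, j i)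
    (n : ℕ) : (2 : ℝ) ^ n * I n ≤ √24 ^ n := by
  refine (pow_le_pow_iff_left₀ (by positivity) (by positivity) two_ne_zero).1 ?_
  calc ((2 : ℝ) ^ n * I n) ^ 2 = 4 ^ n * ((I n ^ 2 : ℕ) : ℝ) := by
        push_cast
        rw [mul_pow, ← pow_mul, mul_comm n 2, pow_mul]
        norm_num
    _ ≤ 4 ^ n * 6 ^ n := by
      gcongr
      exact_mod_cast (I_sq_le_and_six_pow_le hodd heven hI n).1
    _ = (√24 ^ n) ^ 2 := by
      rw [← pow_mul, mul_comm n 2, pow_mul, sq_sqrt (by norm_num), ← mul_pow]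
      norm_num

lemma natCast_le_six_mul_sqrt_pow (hodd : ∀ n, Odd n → j n = 2)
    (heven : ∀ n, 1 ≤ n → Even n → j n = 3) (hI : ∀ n, I n = ∏ i ∈ Finset.Icc 1 n, j i)
    {m n : ℕ} (h : m ≤ 6 * (2 ^ n * I n)) : (m : ℝ) ≤ 6 * √24 ^ n :=
  calc (m : ℝ) ≤ 6 * ((2 : ℝ) ^ n * I n) := by exact_mod_cast h
    _ ≤ 6 * √24 ^ n := by gcongr; exact two_pow_mul_I_le_sqrt_pow hodd heven hI n

lemma six_pow_le_pi_sq_mul_I_succ_sq (hodd : ∀ n, Odd n → j n = 2)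
    (heven : ∀ n, 1 ≤ n → Even n → j n = 3) (hI : ∀ n, I n = ∏ i ∈ Finset.Icc 1 n, j i)
    (n : ℕ) : (6 : ℝ) ^ n ≤ π ^ 2 * (I (n + 1) : ℝ) ^ 2 / 4 := by
  have h : (6 : ℝ) ^ (n + 1) ≤ 2 * (I (n + 1) : ℝ) ^ 2 := by
    exact_mod_cast (I_sq_le_and_six_pow_le hodd heven hI (n + 1)).2
  have hπ : 9 ≤ π ^ 2 := by nlinarith [pi_gt_three]
  rw [pow_succ] at h
  nlinarith [mul_le_mul_of_nonneg_right hπ (sq_nonneg (I (n + 1) : ℝ))]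

lemma two_mul_pow_le_multiplicity (hodd : ∀ n, Odd n → j n = 2)
    (heven : ∀ n, 1 ≤ n → Even n → j n = 3) (hI : ∀ n, I n = ∏ i ∈ Finset.Icc 1 n, j i)
    (m : ℕ) : 2 * 24 ^ m ≤ 2 ^ (2 * m + 1) * (I (2 * m + 1) - 1) := by
  rw [(I_two_mul hodd heven hI m).2, pow_succ, pow_mul,
    show 24 ^ m = (2 ^ 2) ^ m * 6 ^ m by rw [← mul_pow]; norm_num]
  have := Nat.one_le_pow m 6 (by norm_num)
  calc 2 * ((2 ^ 2) ^ m * 6 ^ m) = (2 ^ 2) ^ m * 2 * 6 ^ m := by ring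
    _ ≤ (2 ^ 2) ^ m * 2 * (2 * 6 ^ m - 1) := Nat.mul_le_mul_left _ (by omega)

-- Unfolds to the right-hand side of the defining equation of `Z`.
noncomputable def heatTrace (j I : ℕ → ℕ) (t : ℝ) : ℝ :=
  ∑' k : ℕ, exp (-((k : ℝ) ^ 2 * π ^ 2) * t) +
  weightedHeatSum (fun n => (2 : ℝ) ^ (n + 1))
    (fun n k => ((k : ℝ) + 1 / 2) ^ 2 * π ^ 2 * (I (n + 1) : ℝ) ^ 2) t +
  weightedHeatSum (fun n => ((2 ^ n * (j (n + 1) - 2) * I n : ℕ) : ℝ))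
    (fun n k => ((k : ℝ) + 1) ^ 2 * π ^ 2 * (I (n + 1) : ℝ) ^ 2) t +
  weightedHeatSum (fun n => ((2 ^ (n + 1) * (I (n + 1) - 1) : ℕ) : ℝ))
    (fun n k => ((k : ℝ) + 1) ^ 2 * π ^ 2 * (I (n + 2) : ℝ) ^ 2) t +
  weightedHeatSum (fun n => ((2 ^ n * (I (n + 1) - 1) : ℕ) : ℝ))
    (fun n k => ((k : ℝ) + 1) ^ 2 * π ^ 2 * (I (n + 2) : ℝ) ^ 2 / 4) t

lemma multiplicities_le (hodd : ∀ n, Odd n → j n = 2)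
    (heven : ∀ n, 1 ≤ n → Even n → j n = 3) (hI : ∀ n, I n = ∏ i ∈ Finset.Icc 1 n, j i)
    (n : ℕ) :
    (2 : ℝ) ^ (n + 1) ≤ 6 * √24 ^ n ∧
      ((2 ^ n * (j (n + 1) - 2) * I n : ℕ) : ℝ) ≤ 6 * √24 ^ n ∧
      ((2 ^ (n + 1) * (I (n + 1) - 1) : ℕ) : ℝ) ≤ 6 * √24 ^ n ∧
      ((2 ^ n * (I (n + 1) - 1) : ℕ) : ℝ) ≤ 6 * √24 ^ n := by
  have hM : ∀ {m : ℕ}, m ≤ 6 * (2 ^ n * I n) → (m : ℝ) ≤ 6 * √24 ^ n :=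
    natCast_le_six_mul_sqrt_pow hodd heven hI
  have hI₁ : I (n + 1) - 1 ≤ 3 * I n := by have := I_succ_le hodd heven hI n; omega
  have h₄ : 2 ^ (n + 1) * (I (n + 1) - 1) ≤ 6 * (2 ^ n * I n) :=
    calc 2 ^ (n + 1) * (I (n + 1) - 1) ≤ 2 ^ (n + 1) * (3 * I n) := Nat.mul_le_mul_left _ hI₁
      _ = 6 * (2 ^ n * I n) := by ring
  refine ⟨?_, hM ?_, hM h₄, hM (le_trans ?_ h₄)⟩
  · have := Nat.mul_le_mul_left (2 ^ n) (I_pos hodd heven hI n)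
    exact_mod_cast hM (m := 2 ^ (n + 1)) (by rw [pow_succ]; omega)
  · rw [mul_right_comm, mul_comm]
    exact Nat.mul_le_mul_right _ (by have := j_succ_le_three hodd heven n; omega)
  · exact Nat.mul_le_mul_right _ (Nat.pow_le_pow_right (by norm_num) n.le_succ)

lemma eigenvalues_ge (hodd : ∀ n, Odd n → j n = 2)
    (heven : ∀ n, 1 ≤ n → Even n → j n = 3) (hI : ∀ n, I n = ∏ i ∈ Finset.Icc 1 n, j i)
    (n k : ℕ) :
    ((k : ℝ) + 1) ^ 2 * 6 ^ n ≤ ((k : ℝ) + 1 / 2) ^ 2 * π ^ 2 * (I (n + 1) : ℝ) ^ 2 ∧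
      ((k : ℝ) + 1) ^ 2 * 6 ^ n ≤ ((k : ℝ) + 1) ^ 2 * π ^ 2 * (I (n + 1) : ℝ) ^ 2 ∧
      ((k : ℝ) + 1) ^ 2 * 6 ^ n ≤ ((k : ℝ) + 1) ^ 2 * π ^ 2 * (I (n + 2) : ℝ) ^ 2 ∧
      ((k : ℝ) + 1) ^ 2 * 6 ^ n ≤ ((k : ℝ) + 1) ^ 2 * π ^ 2 * (I (n + 2) : ℝ) ^ 2 / 4 := by
  have hx₁ := mul_le_mul_of_nonneg_left (six_pow_le_pi_sq_mul_I_succ_sq hodd heven hI n)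
    (sq_nonneg ((k : ℝ) + 1))
  have hx₂ := mul_le_mul_of_nonneg_left ((pow_le_pow_right₀ (by norm_num : (1 : ℝ) ≤ 6)
    n.le_succ).trans (six_pow_le_pi_sq_mul_I_succ_sq hodd heven hI (n + 1)))
    (sq_nonneg ((k : ℝ) + 1))
  have hπI : ∀ m, 0 ≤ ((k : ℝ) + 1) ^ 2 * (π ^ 2 * (I m : ℝ) ^ 2) := fun m => by positivity
  have hk : ((k : ℝ) + 1) ^ 2 ≤ 4 * ((k : ℝ) + 1 / 2) ^ 2 := by nlinarith [k.cast_nonneg (α := ℝ)]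
  refine ⟨?_, ?_, ?_, ?_⟩
  · nlinarith [mul_le_mul_of_nonneg_right hk (by positivity : 0 ≤ π ^ 2 * (I (n + 1) : ℝ) ^ 2)]
  · nlinarith [hπI (n + 1)]
  · nlinarith [hπI (n + 2)]
  · nlinarith

lemma exists_heatTrace_le (hodd : ∀ n, Odd n → j n = 2) (heven : ∀ n, 1 ≤ n → Even n → j n = 3)
    (hI : ∀ n, I n = ∏ i ∈ Finset.Icc 1 n, j i) :
    ∃ C, 0 < C ∧ ∀ t ∈ Set.Ioc (0 : ℝ) 1,
      heatTrace j I t ≤ C * t ^ (-(log 24 / (2 * log 6))) := by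
  set α := log 24 / (2 * log 6)
  obtain ⟨hα, hα1⟩ := exponent_mem
  obtain ⟨C, hC, hbound⟩ :=
    exists_weightedHeatSum_le (r := 6) (c := 6) (by norm_num) hα hα1 (by norm_num)
  rw [six_rpow_exponent] at hbound
  have hM := multiplicities_le hodd heven hI
  have hx := eigenvalues_ge hodd heven hI
  set K := ∑' k : ℕ, ((k : ℝ) + 1) ^ (-(2 * α))
  have hK : 0 ≤ K := tsum_nonneg fun _ => by positivity
  refine ⟨1 + K + 4 * C, by positivity, ?_⟩
  rintro t ⟨ht, ht1⟩
  have hT₁ : ∑' k : ℕ, exp (-((k : ℝ) ^ 2 * π ^ 2) * t) ≤ 1 + K * t ^ (-α) := by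
    rw [tsum_exp_neg_sq_mul_eq one_le_pi_sq ht]
    gcongr
    refine (tsum_exp_neg_mul_le_thetaSum ht fun k => ?_).trans (thetaSum_le hα hα1.le ht)
    exact mul_le_mul_of_nonneg_right (le_mul_of_one_le_right (sq_nonneg _) one_le_pi_sq) ht.le
  have hT := fun M x hM0 hM hx => (hbound t ht ht1 M x hM0 hM hx).2
  have h₂ := hT _ _ (fun n => by positivity) (fun n => (hM n).1) (fun n k => (hx n k).1)
  have h₃ := hT _ _ (fun n => by positivity) (fun n => (hM n).2.1) (fun n k => (hx n k).2.1)
  have h₄ := hT _ _ (fun n => by positivity) (fun n => (hM n).2.2.1) (fun n k => (hx n k).2.2.1)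
  have h₅ := hT _ _ (fun n => by positivity) (fun n => (hM n).2.2.2) (fun n k => (hx n k).2.2.2)
  have h1 : 1 ≤ t ^ (-α) := one_le_rpow_of_pos_of_le_one_of_nonpos ht ht1 (by linarith)
  rw [heatTrace]
  nlinarith

lemma one_add_weightedHeatSum_le_heatTrace (j I : ℕ → ℕ) {t : ℝ} (ht : 0 < t) :
    1 + weightedHeatSum (fun n => ((2 ^ (n + 1) * (I (n + 1) - 1) : ℕ) : ℝ))
      (fun n k => ((k : ℝ) + 1) ^ 2 * π ^ 2 * (I (n + 2) : ℝ) ^ 2) t ≤ heatTrace j I t := by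
  have hT₁ : 1 ≤ ∑' k : ℕ, exp (-((k : ℝ) ^ 2 * π ^ 2) * t) := by
    rw [tsum_exp_neg_sq_mul_eq one_le_pi_sq ht]
    exact le_add_of_nonneg_right (tsum_nonneg fun _ => (exp_pos _).le)
  have h₂ := weightedHeatSum_nonneg (fun n => (by positivity : 0 ≤ (2 : ℝ) ^ (n + 1)))
    (fun n k => ((k : ℝ) + 1 / 2) ^ 2 * π ^ 2 * (I (n + 1) : ℝ) ^ 2) t
  have h₃ := weightedHeatSum_nonneg (fun n => (2 ^ n * (j (n + 1) - 2) * I n).cast_nonneg)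
    (fun n k => ((k : ℝ) + 1) ^ 2 * π ^ 2 * (I (n + 1) : ℝ) ^ 2) t
  have h₅ := weightedHeatSum_nonneg (fun n => (2 ^ n * (I (n + 1) - 1)).cast_nonneg)
    (fun n k => ((k : ℝ) + 1) ^ 2 * π ^ 2 * (I (n + 2) : ℝ) ^ 2 / 4) t
  rw [heatTrace]
  linarith

lemma two_mul_pow_mul_exp_le_weightedHeatSum (hodd : ∀ n, Odd n → j n = 2)
    (heven : ∀ n, 1 ≤ n → Even n → j n = 3) (hI : ∀ n, I n = ∏ i ∈ Finset.Icc 1 n, j i)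
    {t : ℝ} (ht : 0 < t) (m : ℕ) (hm : (36 : ℝ) ^ (m + 1) * t ≤ 1) :
    2 * 24 ^ m * exp (-π ^ 2) ≤
      weightedHeatSum (fun n => ((2 ^ (n + 1) * (I (n + 1) - 1) : ℕ) : ℝ))
        (fun n k => ((k : ℝ) + 1) ^ 2 * π ^ 2 * (I (n + 2) : ℝ) ^ 2) t := by
  have ht1 : t ≤ 1 := le_trans (le_mul_of_one_le_left ht.le (one_le_pow₀ (by norm_num))) hm
  obtain ⟨hα, hα1⟩ := exponent_mem
  obtain ⟨C, -, hbound⟩ :=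
    exists_weightedHeatSum_le (r := 6) (c := 6) (by norm_num) hα hα1 (by norm_num)
  rw [six_rpow_exponent] at hbound
  have hsum := (hbound t ht ht1 _ _ (fun n => (2 ^ (n + 1) * (I (n + 1) - 1)).cast_nonneg)
    (fun n => (multiplicities_le hodd heven hI n).2.2.1)
    (fun n k => (eigenvalues_ge hodd heven hI n k).2.2.1)).1
  have hsumk : Summable fun k : ℕ =>
      exp (-(((k : ℝ) + 1) ^ 2 * π ^ 2 * (I (2 * m + 2) : ℝ) ^ 2) * t) :=
    summable_exp_neg_mul_of_sq_mul_le ht fun k => mul_le_mul_of_nonneg_right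
      ((le_mul_of_one_le_right (sq_nonneg _) (one_le_pow₀ (by norm_num))).trans
        (eigenvalues_ge hodd heven hI (2 * m) k).2.2.1) ht.le
  have hx : exp (-π ^ 2) ≤
      exp (-((((0 : ℕ) : ℝ) + 1) ^ 2 * π ^ 2 * (I (2 * m + 2) : ℝ) ^ 2) * t) := by
    have hI₂ : I (2 * m + 2) = 6 ^ (m + 1) := (I_two_mul hodd heven hI (m + 1)).1
    rw [hI₂, neg_mul, exp_le_exp, neg_le_neg_iff]
    push_cast
    calc (0 + 1) ^ 2 * π ^ 2 * ((6 : ℝ) ^ (m + 1)) ^ 2 * t = π ^ 2 * (36 ^ (m + 1) * t) := by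
          rw [← pow_mul, mul_comm (m + 1), pow_mul]; ring
      _ ≤ π ^ 2 := mul_le_of_le_one_right (sq_nonneg π) hm
  have hM : (2 : ℝ) * 24 ^ m ≤ ((2 ^ (2 * m + 1) * (I (2 * m + 1) - 1) : ℕ) : ℝ) := by
    exact_mod_cast two_mul_pow_le_multiplicity hodd heven hI m
  exact (mul_le_mul hM hx (exp_pos _).le (Nat.cast_nonneg _)).trans
    (mul_exp_neg_le_weightedHeatSum (n := 2 * m)
      (fun n => (2 ^ (n + 1) * (I (n + 1) - 1)).cast_nonneg) hsum hsumk)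

lemma le_heatTrace (hodd : ∀ n, Odd n → j n = 2) (heven : ∀ n, 1 ≤ n → Even n → j n = 3)
    (hI : ∀ n, I n = ∏ i ∈ Finset.Icc 1 n, j i) {t : ℝ} (ht : 0 < t) (m : ℕ)
    (hm : (36 : ℝ) ^ m * t ≤ 1) : 24 ^ m * exp (-π ^ 2) / 12 ≤ heatTrace j I t := by
  refine le_trans ?_ (one_add_weightedHeatSum_le_heatTrace j I ht)
  cases m with
  | zero =>
    have h₁ : exp (-π ^ 2) ≤ 1 := exp_le_one_iff.2 (by nlinarith [sq_nonneg π])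
    have h₄ := weightedHeatSum_nonneg (fun n => (2 ^ (n + 1) * (I (n + 1) - 1)).cast_nonneg)
      (fun n k => ((k : ℝ) + 1) ^ 2 * π ^ 2 * (I (n + 2) : ℝ) ^ 2) t
    simp only [pow_zero, one_mul]
    linarith
  | succ m =>
    have := two_mul_pow_mul_exp_le_weightedHeatSum hodd heven hI ht m hm
    rw [pow_succ]
    linarith

lemma exists_le_heatTrace (hodd : ∀ n, Odd n → j n = 2) (heven : ∀ n, 1 ≤ n → Even n → j n = 3)
    (hI : ∀ n, I n = ∏ i ∈ Finset.Icc 1 n, j i) :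
    ∃ c, 0 < c ∧ ∀ t ∈ Set.Ioc (0 : ℝ) 1,
      c * t ^ (-(log 24 / (2 * log 6))) ≤ heatTrace j I t := by
  refine ⟨exp (-π ^ 2) / 288, by positivity, ?_⟩
  rintro t ⟨ht, ht1⟩
  obtain ⟨m, hm, hm1⟩ := exists_nat_pow_near (one_le_one_div ht ht1) (by norm_num : (1 : ℝ) < 36)
  rw [le_div_iff₀ ht] at hm
  have hα : t ^ (-(log 24 / (2 * log 6))) ≤ 24 ^ (m + 1) :=
    calc t ^ (-(log 24 / (2 * log 6))) = t⁻¹ ^ (log 24 / (2 * log 6)) := by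
          rw [rpow_neg ht.le, inv_rpow ht.le]
      _ ≤ ((36 : ℝ) ^ (m + 1)) ^ (log 24 / (2 * log 6)) :=
          rpow_le_rpow (by positivity) (by rw [← one_div]; exact hm1.le)
            (by linarith [exponent_mem.1])
      _ = 24 ^ (m + 1) := by rw [← rpow_pow_comm (by norm_num), thirtySix_rpow_exponent]
  calc exp (-π ^ 2) / 288 * t ^ (-(log 24 / (2 * log 6)))
      ≤ exp (-π ^ 2) / 288 * 24 ^ (m + 1) := by gcongr
    _ = 24 ^ m * exp (-π ^ 2) / 12 := by ring
    _ ≤ heatTrace j I t := le_heatTrace hodd heven hI ht m hm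

end Laakso

/-- The heat-kernel trace of the Laakso space with alternating sequence `j = {2,3,2,3,...}`
satisfies `Z(t) ≍ t^(−α)` with `α = log 24/(2 log 6)` for `t ∈ (0, 1]`; in particular its
spectral dimension equals `log 24/log 6`. -/
theorem laakso_heat_trace_2323
    (j : ℕ → ℕ)
    (hodd : ∀ n, Odd n → j n = 2)
    (heven : ∀ n, 1 ≤ n → Even n → j n = 3)
    (I : ℕ → ℕ) (hI : ∀ n, I n = ∏ i ∈ Finset.Icc 1 n, j i)
    (Z : ℝ → ℝ)
    (hZ : ∀ t : ℝ, Z t =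
      (∑' k : ℕ, Real.exp (-((k : ℝ) ^ 2 * π ^ 2) * t)) +
      (∑' n : ℕ, (2 : ℝ) ^ (n + 1) *
        ∑' k : ℕ, Real.exp (-(((k : ℝ) + 1 / 2) ^ 2 * π ^ 2 * (I (n + 1) : ℝ) ^ 2) * t)) +
      (∑' n : ℕ, ((2 ^ n * (j (n + 1) - 2) * I n : ℕ) : ℝ) *
        ∑' k : ℕ, Real.exp (-(((k : ℝ) + 1) ^ 2 * π ^ 2 * (I (n + 1) : ℝ) ^ 2) * t)) +
      (∑' n : ℕ, ((2 ^ (n + 1) * (I (n + 1) - 1) : ℕ) : ℝ) *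
        ∑' k : ℕ, Real.exp (-(((k : ℝ) + 1) ^ 2 * π ^ 2 * (I (n + 2) : ℝ) ^ 2) * t)) +
      (∑' n : ℕ, ((2 ^ n * (I (n + 1) - 1) : ℕ) : ℝ) *
        ∑' k : ℕ, Real.exp (-(((k : ℝ) + 1) ^ 2 * π ^ 2 * (I (n + 2) : ℝ) ^ 2 / 4) * t))) :
    ∃ c C : ℝ, 0 < c ∧ 0 < C ∧
      ∀ t ∈ Set.Ioc (0 : ℝ) 1,
        c * t ^ (-(Real.log 24 / (2 * Real.log 6))) ≤ Z t ∧
        Z t ≤ C * t ^ (-(Real.log 24 / (2 * Real.log 6))) := by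
  have hZ' : Z = Laakso.heatTrace j I := funext hZ
  subst hZ'
  obtain ⟨c, hc, hlow⟩ := Laakso.exists_le_heatTrace hodd heven hI
  obtain ⟨C, hC, hup⟩ := Laakso.exists_heatTrace_le hodd heven hI
  exact ⟨c, C, hc, hC, fun t ht => ⟨hlow t ht, hup t ht⟩⟩
end
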